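/- arXiv:2011.00256 — 12 statements merged into one kernel-verified Lean document; each statement's English description precedes it below -/
import Mathlib

section
/- (Ostrowski's inequality, 1938) Let a < b be real numbers and let f : [a,b] → ℝ be continuous on [a,b] and differentiable on (a,b), with |f'(t)| ≤ M for all t ∈ (a,b). Then for every x ∈ [a,b], |f(x) - (1/(b-a)) ∫_a^b f(t) dt| ≤ [1/4 + (x - (a+b)/2)²/(b-a)²] (b-a) M. -/
/-!
The mean value theorem makes `f` `M`-Lipschitz on `[a, b]`, so `|f x - f t| ≤ M |x - t|`.
Averaging over `t ∈ [a, b]` and using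
`∫_a^b |t - x| dt = ((x - a)² + (b - x)²) / 2 = (b - a)² / 4 + (x - (a + b) / 2)²`
gives the bound.
-/

open MeasureTheory intervalIntegral Set

theorem integral_abs_sub_of_mem_Icc {a b x : ℝ} (hx : x ∈ Icc a b) :
    ∫ t in a..b, |t - x| = ((x - a) ^ 2 + (b - x) ^ 2) / 2 := by
  have hcont : Continuous fun t : ℝ => |t - x| := by fun_prop
  have hleft : ∫ t in a..x, |t - x| = (a - x) ^ 2 / 2 := by
    rw [integral_of_le hx.1, ← uIoc_of_ge hx.1]
    simpa [sq_abs, one_add_one_eq_two] using integral_pow_abs_sub_uIoc (a := x) (b := a) (n := 1)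
  have hright : ∫ t in x..b, |t - x| = (b - x) ^ 2 / 2 := by
    rw [integral_of_le hx.2, ← uIoc_of_le hx.2]
    simpa [sq_abs, one_add_one_eq_two] using integral_pow_abs_sub_uIoc (a := x) (b := b) (n := 1)
  rw [← integral_add_adjacent_intervals (hcont.intervalIntegrable a x)
    (hcont.intervalIntegrable x b), hleft, hright]
  ring

theorem Convex.abs_sub_le_mul_abs_sub_of_abs_deriv_le {D : Set ℝ} (hD : Convex ℝ D)
    {f f' : ℝ → ℝ} {M : ℝ} (hf : ContinuousOn f D)
    (hderiv : ∀ t ∈ interior D, HasDerivAt f (f' t) t) (hbound : ∀ t ∈ interior D, |f' t| ≤ M)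
    {x y : ℝ} (hx : x ∈ D) (hy : y ∈ D) : |f y - f x| ≤ M * |y - x| := by
  wlog hxy : x ≤ y generalizing x y
  · rw [abs_sub_comm, abs_sub_comm y]
    exact this hy hx (le_of_not_ge hxy)
  have hdiff : DifferentiableOn ℝ f (interior D) := fun t ht =>
    (hderiv t ht).differentiableAt.differentiableWithinAt
  have hderiv_eq : ∀ t ∈ interior D, deriv f t = f' t := fun t ht => (hderiv t ht).deriv
  have hlower := hD.mul_sub_le_image_sub_of_le_deriv hf hdiff (C := -M)
    (fun t ht => hderiv_eq t ht ▸ (abs_le.1 (hbound t ht)).1) x hx y hy hxy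
  have hupper := hD.image_sub_le_mul_sub_of_deriv_le hf hdiff (C := M)
    (fun t ht => hderiv_eq t ht ▸ (abs_le.1 (hbound t ht)).2) x hx y hy hxy
  rw [abs_of_nonneg (sub_nonneg.2 hxy), abs_le]
  constructor <;> linarith

theorem sub_mul_integral_eq_mul_integral_sub {a b : ℝ} (hab : a < b) {f : ℝ → ℝ}
    (hf : IntervalIntegrable f volume a b) (c : ℝ) :
    c - (1 / (b - a)) * ∫ t in a..b, f t = (1 / (b - a)) * ∫ t in a..b, (c - f t) := by
  rw [integral_sub intervalIntegrable_const hf, intervalIntegral.integral_const, smul_eq_mul]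
  field_simp [(sub_pos.2 hab).ne']

theorem ostrowski_inequality_general (a b M : ℝ) (hab : a < b)
    (f f' : ℝ → ℝ) (hcont : ContinuousOn f (Set.Icc a b))
    (hderiv : ∀ t ∈ Set.Ioo a b, HasDerivAt f (f' t) t)
    (hbound : ∀ t ∈ Set.Ioo a b, |f' t| ≤ M)
    (x : ℝ) (hx : x ∈ Set.Icc a b) :
    |f x - (1 / (b - a)) * ∫ t in a..b, f t| ≤
      (1 / 4 + (x - (a + b) / 2) ^ 2 / (b - a) ^ 2) * (b - a) * M := by
  have hba : 0 < b - a := sub_pos.2 hab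
  have hlip : ∀ t ∈ Icc a b, |f t - f x| ≤ M * |t - x| := fun t ht =>
    (convex_Icc a b).abs_sub_le_mul_abs_sub_of_abs_deriv_le hcont
      (by rwa [interior_Icc]) (by rwa [interior_Icc]) hx ht
  have hdev : |∫ t in a..b, (f x - f t)| ≤ ∫ t in a..b, M * |t - x| := by
    have hmaj : Continuous fun t : ℝ => M * |t - x| := by fun_prop
    rw [← Real.norm_eq_abs]
    refine intervalIntegral.norm_integral_le_of_norm_le hab.le
      (Filter.Eventually.of_forall fun t ht => ?_) (hmaj.intervalIntegrable a b)
    rw [Real.norm_eq_abs, abs_sub_comm]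
    exact hlip t (Ioc_subset_Icc_self ht)
  rw [sub_mul_integral_eq_mul_integral_sub hab (hcont.intervalIntegrable_of_Icc hab.le), abs_mul,
    abs_of_pos (one_div_pos.2 hba)]
  calc 1 / (b - a) * |∫ t in a..b, (f x - f t)|
      ≤ 1 / (b - a) * (M * (((x - a) ^ 2 + (b - x) ^ 2) / 2)) := by
        rw [← integral_abs_sub_of_mem_Icc hx, ← intervalIntegral.integral_const_mul]
        gcongr
    _ = (1 / 4 + (x - (a + b) / 2) ^ 2 / (b - a) ^ 2) * (b - a) * M := by
        field_simp
        ring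

theorem ostrowski_inequality (a b M : ℝ) (hab : a < b) (hM : 0 < M)
    (f f' : ℝ → ℝ) (hcont : ContinuousOn f (Set.Icc a b))
    (hderiv : ∀ t ∈ Set.Ioo a b, HasDerivAt f (f' t) t)
    (hbound : ∀ t ∈ Set.Ioo a b, |f' t| ≤ M)
    (x : ℝ) (hx : x ∈ Set.Icc a b) :
    |f x - (1 / (b - a)) * ∫ t in a..b, f t| ≤
      (1 / 4 + (x - (a + b) / 2) ^ 2 / (b - a) ^ 2) * (b - a) * M :=
  ostrowski_inequality_general a b M hab f f' hcont hderiv hbound x hx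
end

section
/- (Composite quadrature estimate via Ostrowski's inequality) Let f : [0,1] → ℝ be continuous on [0,1] and differentiable on (0,1) with |f'(t)| ≤ M for all t ∈ (0,1). Let 0 = a₀ < a₁ < ⋯ < aₙ = 1, set λ_k = a_k - a_{k-1}, and choose nodes x_k with a_{k-1} ≤ x_k ≤ a_k for k = 1,…,n. Then |∫_0^1 f(x) dx - Σ_{k=1}^n λ_k f(x_k)| ≤ (M/2) Σ_{k=1}^n [(x_k - a_{k-1})² + (a_k - x_k)²]. -/
/-!
By the mean value theorem `|f t - f x_k| ≤ M |t - x_k|` on the `k`-th subinterval, and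
`∫ |t - x_k| dt` over it equals `((x_k - a_{k-1})² + (a_k - x_k)²) / 2`. This is Ostrowski's
inequality on one subinterval; summing over `k` gives the estimate.
-/

open MeasureTheory intervalIntegral Set Finset

theorem abs_sub_le_mul_abs_sub_of_hasDerivAt {f f' : ℝ → ℝ} {D : Set ℝ} {M : ℝ}
    (hD : D.OrdConnected) (hf : ContinuousOn f D)
    (hf' : ∀ t ∈ interior D, HasDerivAt f (f' t) t) (hbound : ∀ t ∈ interior D, |f' t| ≤ M)
    {s t : ℝ} (hs : s ∈ D) (ht : t ∈ D) : |f s - f t| ≤ M * |s - t| := by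
  wlog hst : s < t generalizing s t
  · rcases (not_lt.mp hst).eq_or_lt with rfl | hts
    · simp
    · rw [abs_sub_comm, abs_sub_comm s]
      exact this ht hs hts
  have hIoo : Ioo s t ⊆ interior D :=
    interior_maximal (Ioo_subset_Icc_self.trans (hD.out hs ht)) isOpen_Ioo
  obtain ⟨c, hc, hslope⟩ := exists_hasDerivAt_eq_slope f f' hst (hf.mono (hD.out hs ht))
    fun y hy => hf' y (hIoo hy)
  have hdiff : f t - f s = f' c * (t - s) := by
    rw [hslope, div_mul_cancel₀ _ (sub_ne_zero.mpr hst.ne')]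
  rw [abs_sub_comm, hdiff, abs_mul, abs_sub_comm]
  exact mul_le_mul_of_nonneg_right (hbound c (hIoo hc)) (abs_nonneg _)

theorem integral_abs_sub {p q c : ℝ} (hpc : p ≤ c) (hcq : c ≤ q) :
    ∫ t in p..q, |t - c| = ((c - p) ^ 2 + (q - c) ^ 2) / 2 := by
  have hleft : ∫ t in p..c, |t - c| = ∫ t in p..c, (c - t) :=
    integral_congr fun t ht => by
      rw [uIcc_of_le hpc] at ht
      simp only [abs_sub_comm t, abs_of_nonneg (sub_nonneg.mpr ht.2)]
  have hright : ∫ t in c..q, |t - c| = ∫ t in c..q, (t - c) :=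
    integral_congr fun t ht => by
      rw [uIcc_of_le hcq] at ht
      simp only [abs_of_nonneg (sub_nonneg.mpr ht.1)]
  have hcont : Continuous fun t : ℝ => |t - c| := by fun_prop
  rw [← integral_add_adjacent_intervals (hcont.intervalIntegrable p c)
    (hcont.intervalIntegrable c q), hleft, hright,
    intervalIntegral.integral_sub intervalIntegrable_const intervalIntegrable_id,
    intervalIntegral.integral_sub intervalIntegrable_id intervalIntegrable_const]
  simp only [intervalIntegral.integral_const, integral_id, smul_eq_mul]
  ring

theorem abs_integral_sub_mul_le_of_abs_sub_le {f : ℝ → ℝ} {M p q c : ℝ}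
    (hpc : p ≤ c) (hcq : c ≤ q) (hf : IntervalIntegrable f volume p q)
    (hlip : ∀ t ∈ Icc p q, |f t - f c| ≤ M * |t - c|) :
    |(∫ t in p..q, f t) - (q - p) * f c| ≤ M / 2 * ((c - p) ^ 2 + (q - c) ^ 2) := by
  have hpq := hpc.trans hcq
  have hconst : (q - p) * f c = ∫ _ in p..q, f c := by simp [mul_comm]
  rw [hconst, ← integral_sub hf intervalIntegrable_const, ← Real.norm_eq_abs]
  calc ‖∫ t in p..q, f t - f c‖
      ≤ ∫ t in p..q, M * |t - c| :=
        norm_integral_le_of_norm_le hpq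
          (Filter.Eventually.of_forall fun t ht => hlip t (Ioc_subset_Icc_self ht))
          ((by fun_prop : Continuous fun t => M * |t - c|).intervalIntegrable _ _)
    _ = M / 2 * ((c - p) ^ 2 + (q - c) ^ 2) := by
        rw [intervalIntegral.integral_const_mul, integral_abs_sub hpc hcq]
        ring

theorem abs_integral_sub_sum_le_of_abs_sub_le {f : ℝ → ℝ} {M : ℝ} {n : ℕ} {a x : ℕ → ℝ}
    (hx : ∀ k < n, a k ≤ x k ∧ x k ≤ a (k + 1))
    (hf : ∀ k < n, IntervalIntegrable f volume (a k) (a (k + 1)))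
    (hlip : ∀ k < n, ∀ t ∈ Icc (a k) (a (k + 1)), |f t - f (x k)| ≤ M * |t - x k|) :
    |(∫ t in a 0..a n, f t) - ∑ k ∈ range n, (a (k + 1) - a k) * f (x k)| ≤
      M / 2 * ∑ k ∈ range n, ((x k - a k) ^ 2 + (a (k + 1) - x k) ^ 2) := by
  rw [← sum_integral_adjacent_intervals hf, ← sum_sub_distrib, mul_sum]
  refine (abs_sum_le_sum_abs _ _).trans (sum_le_sum fun k hk => ?_)
  rw [Finset.mem_range] at hk
  exact abs_integral_sub_mul_le_of_abs_sub_le (hx k hk).1 (hx k hk).2 (hf k hk) (hlip k hk)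

theorem composite_ostrowski_estimate_general (M : ℝ)
    (f f' : ℝ → ℝ) (hcont : ContinuousOn f (Set.Icc 0 1))
    (hderiv : ∀ t ∈ Set.Ioo (0:ℝ) 1, HasDerivAt f (f' t) t)
    (hbound : ∀ t ∈ Set.Ioo (0:ℝ) 1, |f' t| ≤ M)
    (n : ℕ) (a : ℕ → ℝ) (ha0 : a 0 = 0) (han : a n = 1)
    (hmono : ∀ k < n, a k < a (k + 1))
    (x : ℕ → ℝ) (hx : ∀ k < n, a k ≤ x k ∧ x k ≤ a (k + 1)) :
    |(∫ t in (0:ℝ)..1, f t) - ∑ k ∈ Finset.range n, (a (k + 1) - a k) * f (x k)| ≤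
      (M / 2) * ∑ k ∈ Finset.range n, ((x k - a k) ^ 2 + (a (k + 1) - x k) ^ 2) := by
  have hlip : ∀ s ∈ Icc (0 : ℝ) 1, ∀ t ∈ Icc (0 : ℝ) 1, |f s - f t| ≤ M * |s - t| :=
    fun s hs t ht => abs_sub_le_mul_abs_sub_of_hasDerivAt ordConnected_Icc hcont
      (fun t ht => hderiv t (by rwa [interior_Icc] at ht))
      (fun t ht => hbound t (by rwa [interior_Icc] at ht)) hs ht
  have ha_mono : MonotoneOn a (Set.Iic n) :=
    monotoneOn_of_le_add_one ordConnected_Iic fun k _ _ hk => (hmono k hk).le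
  have ha_mem : ∀ k ≤ n, a k ∈ Icc (0 : ℝ) 1 := fun k hk =>
    ⟨ha0 ▸ ha_mono (Nat.zero_le n) hk (Nat.zero_le k), han ▸ ha_mono hk (le_refl n) hk⟩
  have hsub : ∀ k < n, Icc (a k) (a (k + 1)) ⊆ Icc 0 1 := fun k hk =>
    Icc_subset_Icc (ha_mem k hk.le).1 (ha_mem (k + 1) hk).2
  have hcomposite := abs_integral_sub_sum_le_of_abs_sub_le hx
    (fun k hk => (hcont.mono (hsub k hk)).intervalIntegrable_of_Icc (hmono k hk).le)
    (fun k hk t ht => hlip t (hsub k hk ht) (x k) (hsub k hk (hx k hk)))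
  rwa [ha0, han] at hcomposite

theorem composite_ostrowski_estimate (M : ℝ) (hM : 0 < M)
    (f f' : ℝ → ℝ) (hcont : ContinuousOn f (Set.Icc 0 1))
    (hderiv : ∀ t ∈ Set.Ioo (0:ℝ) 1, HasDerivAt f (f' t) t)
    (hbound : ∀ t ∈ Set.Ioo (0:ℝ) 1, |f' t| ≤ M)
    (n : ℕ) (hn : 0 < n) (a : ℕ → ℝ) (ha0 : a 0 = 0) (han : a n = 1)
    (hmono : ∀ k < n, a k < a (k + 1))
    (x : ℕ → ℝ) (hx : ∀ k < n, a k ≤ x k ∧ x k ≤ a (k + 1)) :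
    |(∫ t in (0:ℝ)..1, f t) - ∑ k ∈ Finset.range n, (a (k + 1) - a k) * f (x k)| ≤
      (M / 2) * ∑ k ∈ Finset.range n, ((x k - a k) ^ 2 + (a (k + 1) - x k) ^ 2) :=
  composite_ostrowski_estimate_general M f f' hcont hderiv hbound n a ha0 han hmono x hx
end

section
/- (Avakumović–Aljančić inequality) Let φ : [0,1] → ℝ be twice differentiable with |φ''(x)| ≤ 1 for all x ∈ [0,1]. Then for every x ∈ [0,1], |φ'(x) - φ(1) + φ(0)| ≤ 1/2 - x + x². -/
/-!
If `|φ''| ≤ 1` then `φ ± t²/2` are convex, so `φ` deviates from each of its tangent lines by at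
most half the squared distance. Comparing the tangent line at `x` with `φ` at both endpoints gives
`|φ 1 - φ 0 - φ' x| ≤ ((1 - x)² + x²) / 2 = 1/2 - x + x²`.
-/

open Set

theorem ConvexOn.add_mul_sub_le_of_hasDerivWithinAt {S : Set ℝ} {f : ℝ → ℝ} {f' x y : ℝ}
    (hfc : ConvexOn ℝ S f) (hx : x ∈ S) (hy : y ∈ S) (hf' : HasDerivWithinAt f f' S x) :
    f x + f' * (y - x) ≤ f y := by
  rcases lt_trichotomy x y with hxy | rfl | hyx
  · have := hfc.le_slope_of_hasDerivWithinAt hx hy hxy hf'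
    rw [slope_def_field, le_div_iff₀ (sub_pos.2 hxy)] at this
    linarith
  · simp
  · have := hfc.slope_le_of_hasDerivWithinAt hy hx hyx hf'
    rw [slope_def_field, div_le_iff₀ (sub_pos.2 hyx)] at this
    linarith

section TangentLine

variable {D : Set ℝ} {f f' f'' : ℝ → ℝ} {C x y : ℝ}

theorem neg_mul_sq_le_sub_tangent_of_neg_le_deriv2 (hD : Convex ℝ D)
    (hf : ∀ t ∈ D, HasDerivWithinAt f (f' t) D t) (hf' : ∀ t ∈ D, HasDerivWithinAt f' (f'' t) D t)
    (hC : ∀ t ∈ D, -C ≤ f'' t) (hx : x ∈ D) (hy : y ∈ D) :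
    -(C / 2 * (y - x) ^ 2) ≤ f y - f x - f' x * (y - x) := by
  have hsq : ∀ t, HasDerivAt (fun s => C / 2 * s ^ 2) (C * t) t := fun t =>
    ((hasDerivAt_pow 2 t).const_mul (C / 2)).congr_deriv (by ring)
  have hg : ∀ t ∈ D, HasDerivWithinAt (fun s => f s + C / 2 * s ^ 2) (f' t + C * t) D t :=
    fun t ht => (hf t ht).add (hsq t).hasDerivWithinAt
  have hg' : ∀ t ∈ D, HasDerivWithinAt (fun s => f' s + C * s) (f'' t + C) D t := fun t ht =>
    ((hf' t ht).add ((hasDerivAt_id' t).const_mul C).hasDerivWithinAt).congr_deriv (by ring)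
  have hconvex : ConvexOn ℝ D (fun s => f s + C / 2 * s ^ 2) :=
    convexOn_of_hasDerivWithinAt2_nonneg hD (fun t ht => (hg t ht).continuousWithinAt)
      (fun t ht => (hg t (interior_subset ht)).mono interior_subset)
      (fun t ht => (hg' t (interior_subset ht)).mono interior_subset)
      (fun t ht => by linarith [hC t (interior_subset ht)])
  linear_combination hconvex.add_mul_sub_le_of_hasDerivWithinAt hx hy (hg x hx)

theorem abs_sub_tangent_le_of_abs_deriv2_le (hD : Convex ℝ D)
    (hf : ∀ t ∈ D, HasDerivWithinAt f (f' t) D t) (hf' : ∀ t ∈ D, HasDerivWithinAt f' (f'' t) D t)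
    (hC : ∀ t ∈ D, |f'' t| ≤ C) (hx : x ∈ D) (hy : y ∈ D) :
    |f y - f x - f' x * (y - x)| ≤ C / 2 * (y - x) ^ 2 := by
  have lower := neg_mul_sq_le_sub_tangent_of_neg_le_deriv2 hD hf hf'
    (fun t ht => (abs_le.1 (hC t ht)).1) hx hy
  have upper := neg_mul_sq_le_sub_tangent_of_neg_le_deriv2 (f := -f) (f' := -f') (f'' := -f'') hD
    (fun t ht => (hf t ht).neg) (fun t ht => (hf' t ht).neg)
    (fun t ht => neg_le_neg (abs_le.1 (hC t ht)).2) hx hy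
  simp only [Pi.neg_apply] at upper
  exact abs_le.2 ⟨lower, by linarith⟩

end TangentLine

theorem avakumovic_aljancic (φ φ' φ'' : ℝ → ℝ)
    (hφ : ∀ x ∈ Set.Icc (0:ℝ) 1, HasDerivWithinAt φ (φ' x) (Set.Icc 0 1) x)
    (hφ' : ∀ x ∈ Set.Icc (0:ℝ) 1, HasDerivWithinAt φ' (φ'' x) (Set.Icc 0 1) x)
    (hbound : ∀ x ∈ Set.Icc (0:ℝ) 1, |φ'' x| ≤ 1)
    (x : ℝ) (hx : x ∈ Set.Icc (0:ℝ) 1) :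
    |φ' x - φ 1 + φ 0| ≤ 1 / 2 - x + x ^ 2 := by
  have at_one := abs_le.1 <| abs_sub_tangent_le_of_abs_deriv2_le (convex_Icc 0 1) hφ hφ' hbound hx
    (right_mem_Icc.2 zero_le_one)
  have at_zero := abs_le.1 <| abs_sub_tangent_le_of_abs_deriv2_le (convex_Icc 0 1) hφ hφ' hbound hx
    (left_mem_Icc.2 zero_le_one)
  exact abs_le.2 ⟨by linear_combination at_one.2 + at_zero.1, by linear_combination at_zero.2 + at_one.1⟩
end

section
/- (Milovanović–Pečarić inequality, Theorem 2.1) Let n > 1 be an integer and let f : ℝ → ℝ be n times differentiable with |f^{(n)}(x)| ≤ M for all x ∈ (a,b), where a < b. For k = 1,…,n-1 define F_k = ((n-k)/k!) · (f^{(k-1)}(a)(x-a)^k - f^{(k-1)}(b)(x-b)^k)/(b-a). Then for every x ∈ [a,b], |(1/n)(f(x) + Σ_{k=1}^{n-1} F_k) - (1/(b-a)) ∫_a^b f(t) dt| ≤ (M/(n·(n+1)!)) · ((x-a)^{n+1} + (b-x)^{n+1})/(b-a). -/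
/-!
Write `n = m + 1` and let `T t = taylorWithinEval f m univ t x` be the Taylor polynomial of `f`
at `t`, evaluated at `x`. Its derivative in `t` is `f⁽ⁿ⁾(t) (x - t)^m / m!`, so comparing
derivatives gives the Lagrange-type bound `|f x - T t| ≤ M |x - t|^n / n!`, with no continuity
of `f⁽ⁿ⁾` needed. On the other hand `T t - n f t` has the explicit primitive
`weightedTaylorPrimitive`, whose values at `a` and `b` are exactly the terms `F_k`. Hence the
left-hand side equals `|∫_a^b (f x - T t) dt| / (n (b - a))`, and integrating the pointwise
bound finishes the proof.
-/

open MeasureTheory intervalIntegral Set Finset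
open scoped Nat

theorem abs_sub_le_sub_of_abs_deriv_le {g g' B B' : ℝ → ℝ} {t x : ℝ} (htx : t ≤ x)
    (hg : ∀ s, HasDerivAt g (g' s) s) (hB : ∀ s, HasDerivAt B (B' s) s)
    (hle : ∀ s ∈ Ioo t x, |g' s| ≤ B' s) : |g x - g t| ≤ B x - B t := by
  have mono : ∀ ε : ℝ, |ε| ≤ 1 → MonotoneOn (fun s => B s - ε * g s) (Icc t x) := by
    intro ε hε
    refine monotoneOn_of_hasDerivWithinAt_nonneg (convex_Icc t x)
      (fun s _ => ((hB s).sub ((hg s).const_mul ε)).continuousAt.continuousWithinAt)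
      (fun s _ => ((hB s).sub ((hg s).const_mul ε)).hasDerivWithinAt) fun s hs => ?_
    rw [interior_Icc] at hs
    have hεg : |ε * g' s| ≤ |g' s| := by
      rw [abs_mul]; exact mul_le_of_le_one_left (abs_nonneg _) hε
    linarith [le_abs_self (ε * g' s), hle s hs]
  have hplus := mono 1 (by norm_num) ⟨le_rfl, htx⟩ ⟨htx, le_rfl⟩ htx
  have hminus := mono (-1) (by norm_num) ⟨le_rfl, htx⟩ ⟨htx, le_rfl⟩ htx
  simp only [one_mul, neg_one_mul] at hplus hminus
  rw [abs_sub_le_iff]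
  constructor <;> linarith

theorem abs_sub_le_of_abs_deriv_le_mul_pow {g g' : ℝ → ℝ} {t x C : ℝ} (m : ℕ)
    (hg : ∀ s, HasDerivAt g (g' s) s) (hle : ∀ s ∈ uIoo t x, |g' s| ≤ C * |x - s| ^ m) :
    |g x - g t| ≤ C * |x - t| ^ (m + 1) / (m + 1) := by
  rcases le_total t x with htx | hxt
  · have hB : ∀ s, HasDerivAt (fun s => -(C * (x - s) ^ (m + 1) / (m + 1)))
        (C * (x - s) ^ m) s := fun s => by
      refine ((((hasDerivAt_id s).const_sub x).pow (m + 1)).const_mul C |>.div_const ((m : ℝ) + 1)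
        |>.neg).congr_deriv ?_
      simp only [id, Nat.add_sub_cancel]
      field_simp
      push_cast
      ring
    convert abs_sub_le_sub_of_abs_deriv_le htx hg hB fun s hs => ?_ using 1
    · rw [abs_of_nonneg (sub_nonneg.2 htx)]; simp
    · rw [uIoo_of_le htx] at hle
      simpa [abs_of_pos (sub_pos.2 hs.2)] using hle s hs
  · have hB : ∀ s, HasDerivAt (fun s => C * (s - x) ^ (m + 1) / (m + 1))
        (C * (s - x) ^ m) s := fun s => by
      refine ((((hasDerivAt_id s).sub_const x).pow (m + 1)).const_mul C
        |>.div_const ((m : ℝ) + 1)).congr_deriv ?_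
      simp only [id, Nat.add_sub_cancel]
      field_simp
      push_cast
      ring
    rw [abs_sub_comm, abs_sub_comm x]
    convert abs_sub_le_sub_of_abs_deriv_le hxt hg hB fun s hs => ?_ using 1
    · rw [abs_of_nonneg (sub_nonneg.2 hxt)]; simp
    · rw [uIoo_of_ge hxt] at hle
      simpa [abs_of_neg (sub_neg.2 hs.1)] using hle s hs

theorem hasDerivAt_taylorWithinEval_univ {f : ℝ → ℝ} {m : ℕ} {x : ℝ}
    (hf : ∀ k ≤ m, Differentiable ℝ (iteratedDeriv k f)) (t : ℝ) :
    HasDerivAt (fun t => taylorWithinEval f m univ t x)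
      ((m ! : ℝ)⁻¹ * (x - t) ^ m * iteratedDeriv (m + 1) f t) t := by
  have := hasDerivWithinAt_taylorWithinEval (x := x) uniqueDiffOn_univ Filter.univ_mem (mem_univ t)
    subset_rfl (contDiff_of_differentiable_iteratedDeriv fun k hk => hf k (mod_cast hk)).contDiffOn
    (by rw [iteratedDerivWithin_univ]; exact (hf m le_rfl t).differentiableWithinAt)
  rw [hasDerivWithinAt_univ, iteratedDerivWithin_univ, smul_eq_mul] at this
  exact this

theorem abs_sub_taylorWithinEval_univ_le {f : ℝ → ℝ} {m : ℕ} {t x M : ℝ}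
    (hf : ∀ k ≤ m, Differentiable ℝ (iteratedDeriv k f))
    (hM : ∀ s ∈ uIoo t x, |iteratedDeriv (m + 1) f s| ≤ M) :
    |f x - taylorWithinEval f m univ t x| ≤ M * |x - t| ^ (m + 1) / (m + 1)! := by
  have key := abs_sub_le_of_abs_deriv_le_mul_pow (C := M / m !) m
      (hasDerivAt_taylorWithinEval_univ (x := x) hf) fun s hs => by
    rw [abs_mul, abs_mul, abs_pow, abs_inv, Nat.abs_cast, div_eq_inv_mul, mul_right_comm]
    gcongr
    exact hM s hs
  rw [taylorWithinEval_self] at key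
  refine key.trans_eq ?_
  rw [Nat.factorial_succ]
  push_cast
  field_simp

theorem sum_range_mul_sub_sub (w : ℕ → ℝ) (m : ℕ) :
    ∑ i ∈ range m, ((m : ℝ) - i) * (w (i + 1) - w i)
      = ∑ i ∈ range (m + 1), w i - (m + 1) * w 0 := by
  induction m with
  | zero => simp
  | succ m ih =>
    have hsplit : ∀ i ∈ range m, ((m + 1 : ℕ) - (i : ℝ)) * (w (i + 1) - w i)
        = ((m : ℝ) - i) * (w (i + 1) - w i) + (w (i + 1) - w i) := by
      intro i _; push_cast; ring
    rw [sum_range_succ, sum_congr rfl hsplit, sum_add_distrib, ih, sum_range_sub,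
      sum_range_succ _ (m + 1)]
    push_cast
    ring

theorem hasDerivAt_taylorMonomial_mul {p : ℝ → ℝ} {q t x : ℝ} (k : ℕ)
    (hp : HasDerivAt p q t) :
    HasDerivAt (fun s => ((k + 1)! : ℝ)⁻¹ * (x - s) ^ (k + 1) * p s)
      (((k + 1)! : ℝ)⁻¹ * (x - t) ^ (k + 1) * q - (k ! : ℝ)⁻¹ * (x - t) ^ k * p t) t := by
  refine ((((hasDerivAt_id t).const_sub x).pow (k + 1)).const_mul _ |>.mul hp).congr_deriv ?_
  simp only [id, Pi.pow_apply, Nat.add_sub_cancel, Nat.factorial_succ]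
  push_cast
  field_simp
  ring

noncomputable def weightedTaylorPrimitive (f : ℝ → ℝ) (m : ℕ) (x t : ℝ) : ℝ :=
  ∑ i ∈ range m,
    ((m : ℝ) - i) * (((i + 1)! : ℝ)⁻¹ * (x - t) ^ (i + 1) * iteratedDeriv i f t)

theorem hasDerivAt_weightedTaylorPrimitive {f : ℝ → ℝ} {m : ℕ} {x : ℝ}
    (hf : ∀ k < m, Differentiable ℝ (iteratedDeriv k f)) (t : ℝ) :
    HasDerivAt (weightedTaylorPrimitive f m x)
      (taylorWithinEval f m univ t x - (m + 1) * f t) t := by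
  have hterm : ∀ i ∈ range m, HasDerivAt
      (fun s => ((m : ℝ) - i) * (((i + 1)! : ℝ)⁻¹ * (x - s) ^ (i + 1) * iteratedDeriv i f s))
      (((m : ℝ) - i) * (((i + 1)! : ℝ)⁻¹ * (x - t) ^ (i + 1) * iteratedDeriv (i + 1) f t
        - (i ! : ℝ)⁻¹ * (x - t) ^ i * iteratedDeriv i f t)) t := fun i hi => by
    refine (hasDerivAt_taylorMonomial_mul i ?_).const_mul _
    rw [iteratedDeriv_succ]
    exact (hf i (mem_range.1 hi) t).hasDerivAt
  refine (HasDerivAt.fun_sum hterm).congr_deriv ?_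
  rw [sum_range_mul_sub_sub (fun k => (k ! : ℝ)⁻¹ * (x - t) ^ k * iteratedDeriv k f t),
    taylor_within_apply]
  simp [iteratedDerivWithin_univ]

theorem sum_Icc_eq_weightedTaylorPrimitive_sub (f : ℝ → ℝ) (m : ℕ) (a b x : ℝ) :
    ∑ k ∈ Icc 1 m, ((m : ℝ) + 1 - k) / k ! *
      ((iteratedDeriv (k - 1) f a * (x - a) ^ k - iteratedDeriv (k - 1) f b * (x - b) ^ k)
        / (b - a))
    = (weightedTaylorPrimitive f m x a - weightedTaylorPrimitive f m x b) / (b - a) := by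
  rw [weightedTaylorPrimitive, weightedTaylorPrimitive, ← sum_sub_distrib, sum_div,
    ← Finset.Ico_add_one_right_eq_Icc, sum_Ico_eq_sum_range]
  refine sum_congr rfl fun i _ => ?_
  rw [Nat.add_sub_cancel_left, add_comm 1 i]
  push_cast
  ring

theorem integral_abs_sub_pow {a b x : ℝ} (k : ℕ) (hx : x ∈ Icc a b) :
    ∫ t in a..b, |x - t| ^ k = ((x - a) ^ (k + 1) + (b - x) ^ (k + 1)) / (k + 1) := by
  have hcont : Continuous fun t => |x - t| ^ k := by fun_prop
  have hleft : ∫ t in a..x, |x - t| ^ k = ∫ t in a..x, (x - t) ^ k :=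
    integral_congr fun t ht => by
      rw [uIcc_of_le hx.1] at ht; simp [abs_of_nonneg (sub_nonneg.2 ht.2)]
  have hright : ∫ t in x..b, |x - t| ^ k = ∫ t in x..b, (t - x) ^ k :=
    integral_congr fun t ht => by
      rw [uIcc_of_le hx.2] at ht; simp [abs_sub_comm x, abs_of_nonneg (sub_nonneg.2 ht.1)]
  rw [← integral_add_adjacent_intervals (hcont.intervalIntegrable a x)
    (hcont.intervalIntegrable x b), hleft, hright, integral_comp_sub_left (fun t => t ^ k),
    integral_comp_sub_right (fun t => t ^ k), integral_pow, integral_pow]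
  ring

theorem integral_sub_taylorWithinEval_univ {f : ℝ → ℝ} {m : ℕ} {x : ℝ}
    (hf : ∀ k ≤ m, Differentiable ℝ (iteratedDeriv k f)) (a b : ℝ) :
    ∫ t in a..b, (f x - taylorWithinEval f m univ t x) = (b - a) * f x
      - (weightedTaylorPrimitive f m x b - weightedTaylorPrimitive f m x a)
      - (m + 1) * ∫ t in a..b, f t := by
  have hf₀ : Continuous f := by simpa using (hf 0 m.zero_le).continuous
  have hT : Continuous fun t => taylorWithinEval f m univ t x :=
    continuous_iff_continuousAt.2 fun t => (hasDerivAt_taylorWithinEval_univ hf t).continuousAt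
  have hFTC := integral_eq_sub_of_hasDerivAt
    (fun t _ => hasDerivAt_weightedTaylorPrimitive (x := x) (fun k hk => hf k hk.le) t)
    ((hT.sub (continuous_const.mul hf₀)).intervalIntegrable a b)
  rw [intervalIntegral.integral_sub (hT.intervalIntegrable a b)
    ((hf₀.intervalIntegrable a b).const_mul _), intervalIntegral.integral_const_mul] at hFTC
  rw [intervalIntegral.integral_sub intervalIntegrable_const (hT.intervalIntegrable a b),
    intervalIntegral.integral_const, smul_eq_mul]
  linarith

theorem milovanovic_pecaric_general (n : ℕ) (hn : 1 < n) (a b M : ℝ) (hab : a < b)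
    (f : ℝ → ℝ)
    (hdiff : ∀ k < n, Differentiable ℝ (iteratedDeriv k f))
    (hbound : ∀ t ∈ Set.Ioo a b, |iteratedDeriv n f t| ≤ M)
    (x : ℝ) (hx : x ∈ Set.Icc a b) :
    |(1 / (n : ℝ)) * (f x + ∑ k ∈ Finset.Icc 1 (n - 1),
        (((n : ℝ) - k) / (Nat.factorial k)) *
          ((iteratedDeriv (k - 1) f a * (x - a) ^ k -
            iteratedDeriv (k - 1) f b * (x - b) ^ k) / (b - a))) -
      (1 / (b - a)) * ∫ t in a..b, f t| ≤
    (M / ((n : ℝ) * (Nat.factorial (n + 1)))) *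
      (((x - a) ^ (n + 1) + (b - x) ^ (n + 1)) / (b - a)) := by
  obtain ⟨m, rfl⟩ : ∃ m, n = m + 1 := ⟨n - 1, by omega⟩
  have hf : ∀ k ≤ m, Differentiable ℝ (iteratedDeriv k f) := fun k hk => hdiff k (by omega)
  have hrem : ∀ t ∈ Icc a b,
      ‖f x - taylorWithinEval f m univ t x‖ ≤ M * |x - t| ^ (m + 1) / (m + 1)! :=
    fun t ht => abs_sub_taylorWithinEval_univ_le hf fun s hs => hbound s (uIoo_subset_Ioo ht hx hs)
  have hest : |∫ t in a..b, (f x - taylorWithinEval f m univ t x)|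
      ≤ ∫ t in a..b, M * |x - t| ^ (m + 1) / (m + 1)! :=
    norm_integral_le_of_norm_le hab.le (ae_of_all _ fun t ht => hrem t (Ioc_subset_Icc_self ht))
      (by apply Continuous.intervalIntegrable; fun_prop)
  have hba : 0 < b - a := sub_pos.2 hab
  rw [Nat.add_sub_cancel]
  push_cast
  rw [sum_Icc_eq_weightedTaylorPrimitive_sub]
  calc _ = |∫ t in a..b, (f x - taylorWithinEval f m univ t x)| / ((m + 1) * (b - a)) := by
        rw [integral_sub_taylorWithinEval_univ hf,
          ← abs_of_pos (by positivity : (0 : ℝ) < (m + 1) * (b - a)), ← abs_div]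
        congr 1
        field_simp
        ring
    _ ≤ (∫ t in a..b, M * |x - t| ^ (m + 1) / (m + 1)!) / ((m + 1) * (b - a)) := by gcongr
    _ = _ := by
      simp_rw [mul_div_right_comm M]
      rw [intervalIntegral.integral_const_mul, integral_abs_sub_pow _ hx,
        Nat.factorial_succ (m + 1)]
      push_cast
      field_simp

theorem milovanovic_pecaric (n : ℕ) (hn : 1 < n) (a b M : ℝ) (hab : a < b) (hM : 0 < M)
    (f : ℝ → ℝ)
    (hdiff : ∀ k < n, Differentiable ℝ (iteratedDeriv k f))
    (hbound : ∀ t ∈ Set.Ioo a b, |iteratedDeriv n f t| ≤ M)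
    (x : ℝ) (hx : x ∈ Set.Icc a b) :
    |(1 / (n : ℝ)) * (f x + ∑ k ∈ Finset.Icc 1 (n - 1),
        (((n : ℝ) - k) / (Nat.factorial k)) *
          ((iteratedDeriv (k - 1) f a * (x - a) ^ k -
            iteratedDeriv (k - 1) f b * (x - b) ^ k) / (b - a))) -
      (1 / (b - a)) * ∫ t in a..b, f t| ≤
    (M / ((n : ℝ) * (Nat.factorial (n + 1)))) *
      (((x - a) ^ (n + 1) + (b - x) ^ (n + 1)) / (b - a)) :=
  milovanovic_pecaric_general n hn a b M hab f hdiff hbound x hx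
end

section
/- (Milovanović–Pečarić inequality for n = 2) Let a < b and let f : ℝ → ℝ be twice differentiable with |f''(x)| ≤ M for all x ∈ (a,b). Then for every x ∈ [a,b], |(1/2)(f(x) + ((x-a)f(a) + (b-x)f(b))/(b-a)) - (1/(b-a)) ∫_a^b f(t) dt| ≤ (M(b-a)²/4) [1/12 + (x - (a+b)/2)²/(b-a)²]. -/
open MeasureTheory intervalIntegral Set
open scoped Interval

/-! Since `(x - a)(f a + f x)/2 + (b - x)(f x + f b)/2` is the two-trapezoid approximation of
`∫ t in a..b, f t` with nodes `a, x, b`, the left-hand side is `(E₁ + E₂)/(b - a)` for the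
trapezoidal errors `E₁, E₂` on `[a, x]` and `[x, b]`. The classical bound `|E| ≤ M h³/12` on an
interval of length `h` and the identity
`((x - a)³ + (b - x)³)/(b - a) = (b - a)²/4 + 3(x - (a + b)/2)²` give the claim. -/

theorem iteratedDerivWithin_two_eq_deriv_deriv {𝕜 : Type*} [NontriviallyNormedField 𝕜]
    {f : 𝕜 → 𝕜} {s : Set 𝕜} {x : 𝕜} (hs : UniqueDiffOn 𝕜 s)
    (hf : ∀ y ∈ s, DifferentiableAt 𝕜 f y) (hf' : DifferentiableAt 𝕜 (deriv f) x)
    (hx : x ∈ s) :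
    iteratedDerivWithin 2 f s x = deriv (deriv f) x := by
  have hderiv : EqOn (derivWithin f s) (deriv f) s := fun y hy => (hf y hy).derivWithin (hs y hy)
  rw [iteratedDerivWithin_succ, iteratedDerivWithin_one, derivWithin_congr hderiv (hderiv hx),
    hf'.derivWithin (hs x hx)]

theorem abs_deriv_le_on_Icc_of_Ioo {g : ℝ → ℝ} {a b M : ℝ} (hab : a < b)
    (hg : ∀ t ∈ Icc a b, DifferentiableAt ℝ g t) (hbound : ∀ t ∈ Ioo a b, |deriv g t| ≤ M) :
    ∀ t ∈ Icc a b, |deriv g t| ≤ M := by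
  intro t ht
  -- `s ↦ M s - σ g s` is monotone on `[a, b]`, so its derivative is `≥ 0` even at `a` and `b`.
  have hsigned : ∀ σ : ℝ, |σ| = 1 → σ * deriv g t ≤ M := by
    intro σ hσ
    have hderiv : ∀ s ∈ Icc a b,
        HasDerivAt (fun s => M * s - σ * g s) (M - σ * deriv g s) s := fun s hs =>
      ((hasDerivAt_id s).const_mul M).sub ((hg s hs).hasDerivAt.const_mul σ) |>.congr_deriv
        (by simp)
    have hmono : MonotoneOn (fun s => M * s - σ * g s) (Icc a b) := by
      refine monotoneOn_of_deriv_nonneg (convex_Icc a b)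
        (fun s hs => (hderiv s hs).continuousAt.continuousWithinAt) ?_ ?_ <;>
        rw [interior_Icc] <;> intro s hs
      · exact (hderiv s (Ioo_subset_Icc_self hs)).differentiableAt.differentiableWithinAt
      · rw [(hderiv s (Ioo_subset_Icc_self hs)).deriv, sub_nonneg]
        calc σ * deriv g s ≤ |σ * deriv g s| := le_abs_self _
          _ = |deriv g s| := by rw [abs_mul, hσ, one_mul]
          _ ≤ M := hbound s hs
    have := (hderiv t ht).hasDerivWithinAt.nonneg_of_monotoneOn
      (uniqueDiffOn_Icc hab t ht).accPt hmono
    linarith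
  exact abs_le.mpr ⟨by linarith [hsigned (-1) (by simp)], by simpa using hsigned 1 (by simp)⟩

theorem abs_trapezoidal_error_one_le {f : ℝ → ℝ} {c d M : ℝ} (hcd : c ≤ d)
    (hf : ∀ t ∈ Icc c d, DifferentiableAt ℝ f t)
    (hf' : ∀ t ∈ Icc c d, DifferentiableAt ℝ (deriv f) t)
    (hbound : ∀ t ∈ Icc c d, |deriv (deriv f) t| ≤ M) :
    |trapezoidal_error f 1 c d| ≤ (d - c) ^ 3 * M / 12 := by
  rcases hcd.eq_or_lt with rfl | hlt
  · simp [trapezoidal_error_eq]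
  have hM : 0 ≤ M := (abs_nonneg _).trans (hbound c ⟨le_rfl, hcd⟩)
  rw [← uIcc_of_le hcd] at hf hf' hbound
  have hs := uniqueDiffOn_uIcc hlt.ne
  have hderiv : EqOn (derivWithin f [[c, d]]) (deriv f) [[c, d]] := fun t ht =>
    (hf t ht).derivWithin (hs t ht)
  have hbound₂ : ∀ t, |iteratedDerivWithin 2 f [[c, d]] t| ≤ M := by
    intro t
    by_cases ht : t ∈ [[c, d]]
    · rw [iteratedDerivWithin_two_eq_deriv_deriv hs hf (hf' t ht) ht]
      exact hbound t ht
    · -- off `[[c, d]]` the derivative within `[[c, d]]` is the junk value `0`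
      rwa [iteratedDerivWithin_succ, derivWithin_zero_of_notMem_closure
        (by rwa [uIcc, closure_Icc]), abs_zero]
  simpa [abs_of_pos (sub_pos.2 hlt)] using trapezoidal_error_le
    (fun t ht => (hf t ht).differentiableWithinAt)
    (fun t ht => (hf' t ht).differentiableWithinAt.congr hderiv (hderiv ht)) hbound₂ one_pos

theorem milovanovic_pecaric_n2_general (a b M : ℝ) (hab : a < b)
    (f : ℝ → ℝ) (hdiff : Differentiable ℝ f) (hdiff' : Differentiable ℝ (deriv f))
    (hbound : ∀ t ∈ Set.Ioo a b, |deriv (deriv f) t| ≤ M)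
    (x : ℝ) (hx : x ∈ Set.Icc a b) :
    |(1 / 2) * (f x + ((x - a) * f a + (b - x) * f b) / (b - a)) -
        (1 / (b - a)) * ∫ t in a..b, f t| ≤
      (M * (b - a) ^ 2 / 4) * (1 / 12 + (x - (a + b) / 2) ^ 2 / (b - a) ^ 2) := by
  obtain ⟨hax, hxb⟩ := hx
  have hbound' : ∀ t ∈ Icc a b, |deriv (deriv f) t| ≤ M :=
    abs_deriv_le_on_Icc_of_Ioo hab (fun t _ => hdiff' t) hbound
  have hleft := abs_trapezoidal_error_one_le hax (fun t _ => hdiff t) (fun t _ => hdiff' t)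
    (fun t ht => hbound' t (Icc_subset_Icc_right hxb ht))
  have hright := abs_trapezoidal_error_one_le hxb (fun t _ => hdiff t) (fun t _ => hdiff' t)
    (fun t ht => hbound' t (Icc_subset_Icc_left hax ht))
  have hba : 0 < b - a := sub_pos.2 hab
  have hsplit : (1 / 2) * (f x + ((x - a) * f a + (b - x) * f b) / (b - a)) -
      (1 / (b - a)) * ∫ t in a..b, f t =
        (trapezoidal_error f 1 a x + trapezoidal_error f 1 x b) / (b - a) := by
    rw [trapezoidal_error, trapezoidal_error, trapezoidal_integral_one, trapezoidal_integral_one,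
      ← integral_add_adjacent_intervals (hdiff.continuous.intervalIntegrable a x)
        (hdiff.continuous.intervalIntegrable x b)]
    field_simp
    ring
  rw [hsplit, abs_div, abs_of_pos hba, div_le_iff₀ hba]
  calc |trapezoidal_error f 1 a x + trapezoidal_error f 1 x b|
      ≤ |trapezoidal_error f 1 a x| + |trapezoidal_error f 1 x b| := abs_add_le _ _
    _ ≤ (x - a) ^ 3 * M / 12 + (b - x) ^ 3 * M / 12 := add_le_add hleft hright
    _ = _ := by field_simp; ring

theorem milovanovic_pecaric_n2 (a b M : ℝ) (hab : a < b) (hM : 0 < M)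
    (f : ℝ → ℝ) (hdiff : Differentiable ℝ f) (hdiff' : Differentiable ℝ (deriv f))
    (hbound : ∀ t ∈ Set.Ioo a b, |deriv (deriv f) t| ≤ M)
    (x : ℝ) (hx : x ∈ Set.Icc a b) :
    |(1 / 2) * (f x + ((x - a) * f a + (b - x) * f b) / (b - a)) -
        (1 / (b - a)) * ∫ t in a..b, f t| ≤
      (M * (b - a) ^ 2 / 4) * (1 / 12 + (x - (a + b) / 2) ^ 2 / (b - a) ^ 2) :=
  milovanovic_pecaric_n2_general a b M hab f hdiff hdiff' hbound x hx
end

section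
/- (Three-point estimate with first derivative bound) Let f : [-1,1] → ℝ be differentiable with |f'(t)| ≤ M for all t ∈ [-1,1], and let -1 < x < 1. Then |∫_{-1}^1 f(t) dt - f(x) - (1/2)[(1+x) f(-1) + (1-x) f(1)]| ≤ (1/2)(1 + x²) M. -/
/-!
The error is the sum of the trapezoid-rule errors on `[-1, x]` and `[x, 1]`, since the two
weights of `f x` add up to `1`. By the mean value theorem `f` is `M`-Lipschitz, and the trapezoid
error of an `M`-Lipschitz function on `[a, b]` is at most `M (b - a)² / 4`: split at the midpoint
and compare `f` with its value at the nearer endpoint. Summing,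
`M ((1 + x)² + (1 - x)²) / 4 = M (1 + x²) / 2`.
-/

open MeasureTheory intervalIntegral Set

open scoped NNReal

theorem integral_abs_sub_eq {a b c : ℝ} (hac : a ≤ c) (hcb : c ≤ b) :
    ∫ t in a..b, |t - c| = ((c - a) ^ 2 + (b - c) ^ 2) / 2 := by
  have hint : ∀ u v : ℝ, IntervalIntegrable (fun t => |t - c|) volume u v := fun u v =>
    (continuous_id.sub continuous_const).abs.intervalIntegrable u v
  have left : ∫ t in a..c, |t - c| = ∫ t in a..c, (c - t) :=
    integral_congr fun t ht => by
      rw [uIcc_of_le hac] at ht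
      simp only [abs_sub_comm t c, abs_of_nonneg (sub_nonneg.2 ht.2)]
  have right : ∫ t in c..b, |t - c| = ∫ t in c..b, (t - c) :=
    integral_congr fun t ht => by
      rw [uIcc_of_le hcb] at ht
      simp only [abs_of_nonneg (sub_nonneg.2 ht.1)]
  rw [← integral_add_adjacent_intervals (hint a c) (hint c b), left, right,
    integral_comp_sub_left (fun t => t), integral_comp_sub_right (fun t => t), integral_id,
    integral_id]
  ring

namespace LipschitzOnWith

variable {f : ℝ → ℝ} {K : ℝ≥0} {a b : ℝ}

theorem intervalIntegrable {u v : ℝ} (hf : LipschitzOnWith K f (Icc a b)) (hau : a ≤ u)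
    (huv : u ≤ v) (hvb : v ≤ b) : IntervalIntegrable f volume u v :=
  (hf.mono (Icc_subset_Icc hau hvb)).continuousOn.intervalIntegrable_of_Icc huv

theorem abs_integral_sub_le {c : ℝ} (hf : LipschitzOnWith K f (Icc a b)) (hc : c ∈ Icc a b) :
    |(∫ t in a..b, f t) - (b - a) * f c| ≤ K * ((c - a) ^ 2 + (b - c) ^ 2) / 2 := by
  have hab : a ≤ b := hc.1.trans hc.2
  have hle : ∀ t ∈ Ioc a b, ‖f t - f c‖ ≤ K * |t - c| := fun t ht => by
    simpa only [Real.dist_eq, Real.norm_eq_abs] using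
      hf.dist_le_mul t (Ioc_subset_Icc_self ht) c hc
  calc |(∫ t in a..b, f t) - (b - a) * f c| = ‖∫ t in a..b, (f t - f c)‖ := by
        rw [integral_sub (hf.intervalIntegrable le_rfl hab le_rfl) intervalIntegrable_const,
          intervalIntegral.integral_const, smul_eq_mul, Real.norm_eq_abs]
    _ ≤ ∫ t in a..b, K * |t - c| :=
        intervalIntegral.norm_integral_le_of_norm_le hab (ae_of_all _ hle)
          (((continuous_id.sub continuous_const).abs.const_mul _).intervalIntegrable _ _)
    _ = K * ((c - a) ^ 2 + (b - c) ^ 2) / 2 := by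
        rw [intervalIntegral.integral_const_mul, integral_abs_sub_eq hc.1 hc.2, mul_div_assoc]

theorem abs_integral_sub_trapezoid_le (hf : LipschitzOnWith K f (Icc a b)) (hab : a ≤ b) :
    |(∫ t in a..b, f t) - (b - a) / 2 * (f a + f b)| ≤ K * (b - a) ^ 2 / 4 := by
  obtain ⟨m, hm⟩ : ∃ m, m = (a + b) / 2 := ⟨_, rfl⟩
  have ham : a ≤ m := by linarith
  have hmb : m ≤ b := by linarith
  have hleft := (hf.mono (Icc_subset_Icc_right hmb)).abs_integral_sub_le (left_mem_Icc.2 ham)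
  have hright := (hf.mono (Icc_subset_Icc_left ham)).abs_integral_sub_le (right_mem_Icc.2 hmb)
  rw [← integral_add_adjacent_intervals (hf.intervalIntegrable le_rfl ham hmb)
    (hf.intervalIntegrable ham hmb le_rfl)]
  calc _ = |((∫ t in a..m, f t) - (m - a) * f a) + ((∫ t in m..b, f t) - (b - m) * f b)| := by
        congr 1; rw [hm]; ring
    _ ≤ _ := (abs_add_le _ _).trans (add_le_add hleft hright)
    _ = K * (b - a) ^ 2 / 4 := by rw [hm]; ring

end LipschitzOnWith

theorem three_point_first_derivative_estimate (M : ℝ) (f f' : ℝ → ℝ)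
    (hf : ∀ t ∈ Set.Icc (-1:ℝ) 1, HasDerivWithinAt f (f' t) (Set.Icc (-1) 1) t)
    (hbound : ∀ t ∈ Set.Icc (-1:ℝ) 1, |f' t| ≤ M)
    (x : ℝ) (hx : x ∈ Set.Ioo (-1:ℝ) 1) :
    |(∫ t in (-1:ℝ)..1, f t) - f x - (1 / 2) * ((1 + x) * f (-1) + (1 - x) * f 1)| ≤
      (1 / 2) * (1 + x ^ 2) * M := by
  have hM : 0 ≤ M := (abs_nonneg _).trans (hbound 0 (by norm_num))
  have hlip : LipschitzOnWith M.toNNReal f (Icc (-1) 1) :=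
    (convex_Icc _ _).lipschitzOnWith_of_nnnorm_hasDerivWithin_le hf fun t ht =>
      (Real.le_toNNReal_iff_coe_le hM).2 (hbound t ht)
  have hleft := (hlip.mono (Icc_subset_Icc_right hx.2.le)).abs_integral_sub_trapezoid_le hx.1.le
  have hright := (hlip.mono (Icc_subset_Icc_left hx.1.le)).abs_integral_sub_trapezoid_le hx.2.le
  rw [Real.coe_toNNReal _ hM] at hleft hright
  rw [← integral_add_adjacent_intervals (hlip.intervalIntegrable le_rfl hx.1.le hx.2.le)
    (hlip.intervalIntegrable hx.1.le hx.2.le le_rfl)]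
  calc _ = |((∫ t in (-1)..x, f t) - (x - -1) / 2 * (f (-1) + f x)) +
        ((∫ t in x..1, f t) - (1 - x) / 2 * (f x + f 1))| := by
        congr 1; ring
    _ ≤ _ := (abs_add_le _ _).trans (add_le_add hleft hright)
    _ = (1 / 2) * (1 + x ^ 2) * M := by ring
end

section
/- (Third-derivative estimate for the modified three-point rule of degree 2) Let 0 ≤ x < 1 with x ≠ 0 allowed, and let f : [-1,1] → ℝ be three times differentiable with |f'''(t)| ≤ M for all t ∈ [-1,1]. Then |∫_{-1}^1 f(t) dt - (1/3)[((1+3x)/(1+x)) f(-1) + (4/(1-x²)) f(x) + ((1-3x)/(1-x)) f(1)]| ≤ M₂(x) M, where M₂(x) = (8x⁵ + 49x⁴ - 60x³ + 22x² - 4x + 1)/(36(1-x)⁴) for 0 ≤ x < 1/3, and M₂(x) = 2x/9 for 1/3 ≤ x < 1. -/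
open MeasureTheory intervalIntegral Set
open scoped Interval

/-!
Integrating by parts three times against the cubic `(u - a)² (b - u) / 6`, whose third
derivative is `-1`, turns `∫ f` into boundary terms in `f, f', f''` plus an integral against
`f'''`. Using this Peano kernel on `[-1, x]` with `a = -1` and on `[x, 1]` with `a = 1`, and
choosing `b` so that the values and slopes of the two pieces agree at `x`, the boundary terms
are exactly the three-point rule. Hence the error is `∫ K f'''` and is at most `M ∫ |K|`. The
kernel is nonnegative on `[-1, x]`; on `[x, 1]` it changes sign at `2x / (1 - x)`, which lies
inside the interval exactly when `x < 1/3`, and this accounts for the two cases of `M₂`.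
-/

theorem intervalIntegrable_deriv_of_le {g g' : ℝ → ℝ} {a b m : ℝ}
    (hcont : ContinuousOn g [[a, b]])
    (hderiv : ∀ t ∈ Ioo (min a b) (max a b), HasDerivAt g (g' t) t)
    (hm : ∀ t ∈ Ioo (min a b) (max a b), m ≤ g' t) :
    IntervalIntegrable g' volume a b := by
  -- `g' - m` is a nonnegative derivative, namely of `t ↦ g t - m * t`.
  have shifted : IntervalIntegrable (fun t => g' t - m) volume a b :=
    intervalIntegrable_deriv_of_nonneg (g := fun t => g t - m * t)
      (hcont.sub (continuousOn_const.mul continuousOn_id))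
      (fun t ht =>
        ((hderiv t ht).sub ((hasDerivAt_id' t).const_mul m)).congr_deriv (by ring))
      (fun t ht => sub_nonneg.2 (hm t ht))
  simpa using shifted.add (intervalIntegrable_const (c := m))

theorem integral_mul_third_deriv_eq {p p' p'' f f' f'' f''' : ℝ → ℝ} {a b c : ℝ}
    (hp : ∀ u, HasDerivAt p (p' u) u) (hp' : ∀ u, HasDerivAt p' (p'' u) u)
    (hp'' : ∀ u, HasDerivAt p'' c u)
    (hf : ∀ t ∈ [[a, b]], HasDerivWithinAt f (f' t) [[a, b]] t)
    (hf' : ∀ t ∈ [[a, b]], HasDerivWithinAt f' (f'' t) [[a, b]] t)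
    (hf'' : ∀ t ∈ [[a, b]], HasDerivWithinAt f'' (f''' t) [[a, b]] t)
    (hf''' : IntervalIntegrable f''' volume a b) :
    ∫ u in a..b, p u * f''' u =
      (p b * f'' b - p' b * f' b + p'' b * f b) - (p a * f'' a - p' a * f' a + p'' a * f a)
        - c * ∫ u in a..b, f u := by
  have integrable_of {g g' : ℝ → ℝ}
      (hg : ∀ t ∈ [[a, b]], HasDerivWithinAt g (g' t) [[a, b]] t) :
      IntervalIntegrable g volume a b :=
    ContinuousOn.intervalIntegrable fun t ht => (hg t ht).continuousWithinAt
  have kernel {q q' : ℝ → ℝ} (hq : ∀ u, HasDerivAt q (q' u) u) :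
      ∀ t ∈ [[a, b]], HasDerivWithinAt q (q' t) [[a, b]] t :=
    fun t _ => (hq t).hasDerivWithinAt
  rw [integral_mul_deriv_eq_deriv_mul_of_hasDerivWithinAt (kernel hp) hf''
      (integrable_of (kernel hp')) hf''',
    integral_mul_deriv_eq_deriv_mul_of_hasDerivWithinAt (kernel hp') hf'
      (integrable_of (kernel hp'')) (integrable_of hf''),
    integral_mul_deriv_eq_deriv_mul_of_hasDerivWithinAt (kernel hp'') hf
      intervalIntegrable_const (integrable_of hf'),
    intervalIntegral.integral_const_mul]
  ring

theorem abs_integral_mul_le {g h : ℝ → ℝ} {a b M : ℝ} (hab : a ≤ b)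
    (hg : IntervalIntegrable g volume a b) (hh : ∀ u ∈ Icc a b, |h u| ≤ M) :
    |∫ u in a..b, g u * h u| ≤ (∫ u in a..b, |g u|) * M := by
  rw [← intervalIntegral.integral_mul_const, ← Real.norm_eq_abs]
  refine norm_integral_le_of_norm_le hab (Filter.Eventually.of_forall fun u hu => ?_)
    (hg.abs.mul_const M)
  rw [Real.norm_eq_abs, abs_mul]
  exact mul_le_mul_of_nonneg_left (hh u (Ioc_subset_Icc_self hu)) (abs_nonneg _)

noncomputable def cubicKernel (a b u : ℝ) : ℝ := (u - a) ^ 2 * (b - u) / 6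

section cubicKernel

variable {a b : ℝ}

theorem hasDerivAt_cubicKernel (u : ℝ) :
    HasDerivAt (cubicKernel a b) ((u - a) * (2 * b + a - 3 * u) / 6) u := by
  have h := (((hasDerivAt_id' u).sub_const a).fun_pow 2).fun_mul
    ((hasDerivAt_const u b).fun_sub (hasDerivAt_id' u))
  exact (h.div_const 6).congr_deriv (by norm_num; ring)

theorem hasDerivAt_cubicKernel_deriv (u : ℝ) :
    HasDerivAt (fun u => (u - a) * (2 * b + a - 3 * u) / 6) ((b + 2 * a) / 3 - u) u := by
  have h := ((hasDerivAt_id' u).sub_const a).fun_mul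
    ((hasDerivAt_const u (2 * b + a)).fun_sub ((hasDerivAt_id' u).const_mul 3))
  exact (h.div_const 6).congr_deriv (by ring)

theorem hasDerivAt_cubicKernel_deriv_deriv (u : ℝ) :
    HasDerivAt (fun u => (b + 2 * a) / 3 - u) (-1) u := by
  simpa using (hasDerivAt_id' u).const_sub ((b + 2 * a) / 3)

theorem cubicKernel_nonneg {u : ℝ} (h : u ≤ b) : 0 ≤ cubicKernel a b u := by
  unfold cubicKernel
  have := sub_nonneg.2 h
  positivity

theorem cubicKernel_nonpos {u : ℝ} (h : b ≤ u) : cubicKernel a b u ≤ 0 := by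
  unfold cubicKernel
  have := mul_nonpos_of_nonneg_of_nonpos (sq_nonneg (u - a)) (sub_nonpos.2 h)
  linarith

theorem continuous_cubicKernel : Continuous (cubicKernel a b) := by
  unfold cubicKernel
  fun_prop

theorem integral_cubicKernel (c d : ℝ) :
    ∫ u in c..d, cubicKernel a b u =
      (d - a) ^ 3 * (4 * (b - a) - 3 * (d - a)) / 72
        - (c - a) ^ 3 * (4 * (b - a) - 3 * (c - a)) / 72 := by
  refine integral_eq_sub_of_hasDerivAt
    (f := fun u => (u - a) ^ 3 * (4 * (b - a) - 3 * (u - a)) / 72) (fun u _ => ?_)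
    (continuous_cubicKernel.intervalIntegrable c d)
  have h := (((hasDerivAt_id' u).sub_const a).fun_pow 3).fun_mul
    ((hasDerivAt_const u (4 * (b - a))).fun_sub (((hasDerivAt_id' u).sub_const a).const_mul 3))
  exact (h.div_const 72).congr_deriv (by norm_num [cubicKernel]; ring)

theorem integral_abs_cubicKernel_of_le {c d : ℝ} (hc : c ≤ b) (hd : d ≤ b) :
    ∫ u in c..d, |cubicKernel a b u| = ∫ u in c..d, cubicKernel a b u :=
  integral_congr fun _ hu => abs_of_nonneg (cubicKernel_nonneg (hu.2.trans (max_le hc hd)))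

theorem integral_abs_cubicKernel_of_ge {c d : ℝ} (hc : b ≤ c) (hd : b ≤ d) :
    ∫ u in c..d, |cubicKernel a b u| = -∫ u in c..d, cubicKernel a b u := by
  rw [← intervalIntegral.integral_neg]
  exact integral_congr fun _ hu => abs_of_nonpos (cubicKernel_nonpos ((le_min hc hd).trans hu.1))

end cubicKernel

noncomputable def threePointRule (x : ℝ) (f : ℝ → ℝ) : ℝ :=
  (1 / 3) * (((1 + 3 * x) / (1 + x)) * f (-1) + (4 / (1 - x ^ 2)) * f x +
    ((1 - 3 * x) / (1 - x)) * f 1)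

theorem integral_sub_threePointRule_eq {f f' f'' f''' : ℝ → ℝ} {x : ℝ}
    (hx : x ∈ Ioo (-1 : ℝ) 1)
    (hf : ∀ t ∈ Icc (-1 : ℝ) 1, HasDerivWithinAt f (f' t) (Icc (-1) 1) t)
    (hf' : ∀ t ∈ Icc (-1 : ℝ) 1, HasDerivWithinAt f' (f'' t) (Icc (-1) 1) t)
    (hf'' : ∀ t ∈ Icc (-1 : ℝ) 1, HasDerivWithinAt f'' (f''' t) (Icc (-1) 1) t)
    (hf''' : IntervalIntegrable f''' volume (-1) 1) :
    (∫ t in (-1 : ℝ)..1, f t) - threePointRule x f =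
      (∫ u in (-1 : ℝ)..x, cubicKernel (-1) (2 * x / (1 + x)) u * f''' u) +
        ∫ u in x..1, cubicKernel 1 (2 * x / (1 - x)) u * f''' u := by
  obtain ⟨hx₀, hx₁⟩ := hx
  rw [← uIcc_of_le (show (-1 : ℝ) ≤ 1 by norm_num)] at hf hf' hf''
  have hx : x ∈ [[-1, 1]] := by rw [uIcc_of_le (by norm_num)]; exact ⟨hx₀.le, hx₁.le⟩
  have hleft : [[-1, x]] ⊆ [[-1, 1]] := uIcc_subset_uIcc left_mem_uIcc hx
  have hright : [[x, 1]] ⊆ [[-1, 1]] := uIcc_subset_uIcc hx right_mem_uIcc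
  have restrict {g g' : ℝ → ℝ} {s : Set ℝ} (hs : s ⊆ [[-1, 1]])
      (hg : ∀ t ∈ [[-1, 1]], HasDerivWithinAt g (g' t) [[-1, 1]] t) :
      ∀ t ∈ s, HasDerivWithinAt g (g' t) s t :=
    fun t ht => (hg t (hs ht)).mono hs
  have hfint : IntervalIntegrable f volume (-1) 1 :=
    ContinuousOn.intervalIntegrable fun t ht => (hf t ht).continuousWithinAt
  rw [integral_mul_third_deriv_eq hasDerivAt_cubicKernel hasDerivAt_cubicKernel_deriv
      hasDerivAt_cubicKernel_deriv_deriv (restrict hleft hf) (restrict hleft hf')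
      (restrict hleft hf'') (hf'''.mono_set hleft),
    integral_mul_third_deriv_eq hasDerivAt_cubicKernel hasDerivAt_cubicKernel_deriv
      hasDerivAt_cubicKernel_deriv_deriv (restrict hright hf) (restrict hright hf')
      (restrict hright hf'') (hf'''.mono_set hright),
    ← integral_add_adjacent_intervals (hfint.mono_set hleft) (hfint.mono_set hright)]
  have h₁ : 1 + x ≠ 0 := by linarith
  have h₂ : 1 - x ≠ 0 := by linarith
  have h₃ : 1 - x ^ 2 ≠ 0 := by nlinarith
  unfold threePointRule cubicKernel
  field_simp
  ring

theorem integral_abs_threePointRule_kernel {x : ℝ} (hx₀ : 0 ≤ x) (hx₁ : x < 1) :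
    (∫ u in (-1 : ℝ)..x, |cubicKernel (-1) (2 * x / (1 + x)) u|) +
        ∫ u in x..1, |cubicKernel 1 (2 * x / (1 - x)) u| =
      if x < 1 / 3 then
        (8 * x ^ 5 + 49 * x ^ 4 - 60 * x ^ 3 + 22 * x ^ 2 - 4 * x + 1) / (36 * (1 - x) ^ 4)
      else 2 * x / 9 := by
  have h₁ : 0 < 1 + x := by linarith
  have h₂ : 0 < 1 - x := by linarith
  have hb₂ : x ≤ 2 * x / (1 - x) := by rw [le_div_iff₀ h₂]; nlinarith
  rw [integral_abs_cubicKernel_of_le (by rw [le_div_iff₀ h₁]; linarith)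
      (by rw [le_div_iff₀ h₁]; nlinarith), integral_cubicKernel]
  split_ifs with h
  · have hb₂' : 2 * x / (1 - x) ≤ 1 := by rw [div_le_one h₂]; linarith
    have hint {c d : ℝ} :
        IntervalIntegrable (fun u => |cubicKernel 1 (2 * x / (1 - x)) u|) volume c d :=
      continuous_cubicKernel.abs.intervalIntegrable c d
    rw [← integral_add_adjacent_intervals hint hint, integral_abs_cubicKernel_of_le hb₂ le_rfl,
      integral_abs_cubicKernel_of_ge le_rfl hb₂', integral_cubicKernel, integral_cubicKernel]
    field_simp
    ring
  · rw [integral_abs_cubicKernel_of_le hb₂ (by rw [le_div_iff₀ h₂]; linarith),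
      integral_cubicKernel]
    field_simp
    ring

theorem modified_three_point_third_derivative_estimate (M : ℝ) (f f' f'' f''' : ℝ → ℝ)
    (hf : ∀ t ∈ Set.Icc (-1:ℝ) 1, HasDerivWithinAt f (f' t) (Set.Icc (-1) 1) t)
    (hf' : ∀ t ∈ Set.Icc (-1:ℝ) 1, HasDerivWithinAt f' (f'' t) (Set.Icc (-1) 1) t)
    (hf'' : ∀ t ∈ Set.Icc (-1:ℝ) 1, HasDerivWithinAt f'' (f''' t) (Set.Icc (-1) 1) t)
    (hbound : ∀ t ∈ Set.Icc (-1:ℝ) 1, |f''' t| ≤ M)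
    (x : ℝ) (hx : x ∈ Set.Ico (0:ℝ) 1) :
    |(∫ t in (-1:ℝ)..1, f t) - (1 / 3) * (((1 + 3 * x) / (1 + x)) * f (-1) +
        (4 / (1 - x ^ 2)) * f x + ((1 - 3 * x) / (1 - x)) * f 1)| ≤
      (if x < 1 / 3 then
          (8 * x ^ 5 + 49 * x ^ 4 - 60 * x ^ 3 + 22 * x ^ 2 - 4 * x + 1) / (36 * (1 - x) ^ 4)
        else 2 * x / 9) * M := by
  obtain ⟨hx₀, hx₁⟩ := hx
  have hf''' : IntervalIntegrable f''' volume (-1) 1 :=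
    intervalIntegrable_deriv_of_le (m := -M)
      (by rw [uIcc_of_le (by norm_num)]; exact fun t ht => (hf'' t ht).continuousWithinAt)
      (fun t ht => (hf'' t (by simpa using Ioo_subset_Icc_self ht)).hasDerivAt
        (Icc_mem_nhds (by simpa using ht.1) (by simpa using ht.2)))
      (fun t ht => neg_le_of_abs_le (hbound t (by simpa using Ioo_subset_Icc_self ht)))
  have hbound_on {a b : ℝ} (ha : -1 ≤ a) (hb : b ≤ 1) : ∀ u ∈ Icc a b, |f''' u| ≤ M :=
    fun u hu => hbound u ⟨ha.trans hu.1, hu.2.trans hb⟩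
  change |_ - threePointRule x f| ≤ _
  rw [integral_sub_threePointRule_eq ⟨by linarith, hx₁⟩ hf hf' hf'' hf''',
    ← integral_abs_threePointRule_kernel hx₀ hx₁, add_mul]
  refine (abs_add_le _ _).trans (add_le_add ?_ ?_)
  · exact abs_integral_mul_le (by linarith) (continuous_cubicKernel.intervalIntegrable _ _)
      (hbound_on le_rfl hx₁.le)
  · exact abs_integral_mul_le hx₁.le (continuous_cubicKernel.intervalIntegrable _ _)
      (hbound_on (by linarith) le_rfl)
end

section
/- (Symmetric two-point inequality of Guessab and Schmeisser, second-derivative bound) Let 0 ≤ x ≤ 1 and let f : [-1,1] → ℝ be twice differentiable with |f''(t)| ≤ M for all t ∈ [-1,1]. Then |∫_{-1}^1 f(t) dt - [f(-x) + f(x)]| ≤ M₁(x) M, where M₁(x) = 1/3 - x² for 0 ≤ x ≤ 1/2, and M₁(x) = (1/3)[4(2x-1)^{3/2} + 1 - 3x²] for 1/2 < x ≤ 1. -/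
/-!
Integrating by parts twice on `[-1, -x]`, `[-x, x]` and `[x, 1]` writes the error
`∫ f - (f (-x) + f x)` as `∫ K f''`, where the Peano kernel `K t = (t² + 1) / 2 - max |t| x` is
`(1 + t)² / 2`, `(t² - (2x - 1)) / 2` and `(1 - t)² / 2` on the three pieces; the jumps of `K'`
at `±x` produce the point values. Hence the error is at most `M ∫ |K|`. The kernel is nonnegative
except on `(-√(2x - 1), √(2x - 1))`, which is nonempty exactly when `x > 1/2`; computing
`∫ |K|` gives the two branches of the constant.
-/

open MeasureTheory intervalIntegral Set

theorem intervalIntegrable_deriv_of_abs_le {f f' : ℝ → ℝ} {a b M : ℝ} (hab : a ≤ b)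
    (hf : ∀ t ∈ Ioo a b, HasDerivAt f (f' t) t) (hbound : ∀ t ∈ Ioo a b, |f' t| ≤ M) :
    IntervalIntegrable f' volume a b := by
  have hderiv : EqOn (deriv f) f' (Ioo a b) := fun t ht => (hf t ht).deriv
  rw [intervalIntegrable_iff_integrableOn_Ioo_of_le hab]
  refine IntegrableOn.congr_fun ?_ hderiv measurableSet_Ioo
  refine Measure.integrableOn_of_bounded (M := M) measure_Ioo_lt_top.ne
    (measurable_deriv f).aestronglyMeasurable ?_
  filter_upwards [ae_restrict_mem measurableSet_Ioo] with t ht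
  rw [hderiv ht]
  exact hbound t ht

theorem integral_mul_deriv_deriv_eq_deriv_deriv_mul {f f' f'' w w' w'' : ℝ → ℝ} {a b : ℝ}
    (hab : a ≤ b) (hfc : ContinuousOn f (Icc a b)) (hf'c : ContinuousOn f' (Icc a b))
    (hf : ∀ t ∈ Ioo a b, HasDerivAt f (f' t) t)
    (hf' : ∀ t ∈ Ioo a b, HasDerivAt f' (f'' t) t)
    (hf'' : IntervalIntegrable f'' volume a b)
    (hw : ∀ t, HasDerivAt w (w' t) t) (hw' : ∀ t, HasDerivAt w' (w'' t) t)
    (hw'' : Continuous w'') :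
    ∫ t in a..b, w t * f'' t =
      (w b * f' b - w' b * f b) - (w a * f' a - w' a * f a) + ∫ t in a..b, w'' t * f t := by
  have hwc : Continuous w := continuous_iff_continuousAt.2 fun t => (hw t).continuousAt
  have hw'c : Continuous w' := continuous_iff_continuousAt.2 fun t => (hw' t).continuousAt
  have hwf'' : IntervalIntegrable (fun t => w t * f'' t) volume a b :=
    hf''.continuousOn_mul hwc.continuousOn
  have hw''f : IntervalIntegrable (fun t => w'' t * f t) volume a b :=
    (hfc.intervalIntegrable_of_Icc hab).continuousOn_mul hw''.continuousOn
  have hFTC := integral_eq_sub_of_hasDerivAt_of_le (f := fun t => w t * f' t - w' t * f t) hab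
    ((hwc.continuousOn.mul hf'c).sub (hw'c.continuousOn.mul hfc))
    (fun t ht => (((hw t).mul (hf' t ht)).sub ((hw' t).mul (hf t ht))).congr_deriv (by ring))
    (hwf''.sub hw''f)
  rw [integral_sub hwf'' hw''f] at hFTC
  linarith

theorem abs_integral_mul_le_of_abs_le {w g : ℝ → ℝ} {a b M : ℝ} (hab : a ≤ b)
    (hw : Continuous w)
    (hbound : ∀ t ∈ Icc a b, |g t| ≤ M) :
    |∫ t in a..b, w t * g t| ≤ M * ∫ t in a..b, |w t| := by
  rw [← intervalIntegral.integral_const_mul, ← Real.norm_eq_abs]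
  refine norm_integral_le_of_norm_le hab (ae_of_all _ fun t ht => ?_)
    ((hw.abs.intervalIntegrable a b).const_mul M)
  rw [Real.norm_eq_abs, abs_mul, mul_comm M]
  exact mul_le_mul_of_nonneg_left (hbound t (Ioc_subset_Icc_self ht)) (abs_nonneg _)

theorem integral_eq_add_add_of_le {E : Type*} [NormedAddCommGroup E] [NormedSpace ℝ E]
    {μ : Measure ℝ} {f : ℝ → E} {a b c d : ℝ} (hab : a ≤ b) (hbc : b ≤ c) (hcd : c ≤ d)
    (hf : IntervalIntegrable f μ a d) :
    ∫ t in a..d, f t ∂μ =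
      (∫ t in a..b, f t ∂μ) + (∫ t in b..c, f t ∂μ) + ∫ t in c..d, f t ∂μ := by
  have hsub : ∀ p q, a ≤ p → p ≤ q → q ≤ d → IntervalIntegrable f μ p q :=
    fun p q hp hpq hq => hf.mono_set <| by
      rw [uIcc_of_le hpq, uIcc_of_le (hp.trans (hpq.trans hq))]
      exact Icc_subset_Icc hp hq
  have hbd := hbc.trans hcd
  rw [← integral_add_adjacent_intervals (hsub a b le_rfl hab hbd) (hsub b d hab hbd le_rfl),
    ← integral_add_adjacent_intervals (hsub b c hab hbc hcd)
      (hsub c d (hab.trans hbc) hcd le_rfl),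
    add_assoc]

theorem integral_sq_sub_const (a b c : ℝ) :
    ∫ t in a..b, (t ^ 2 - c) = (b ^ 3 - a ^ 3) / 3 - c * (b - a) := by
  rw [integral_sub (intervalIntegrable_pow 2) intervalIntegrable_const, integral_pow,
    intervalIntegral.integral_const, smul_eq_mul]
  ring

theorem integral_abs_sq_sub_sq {s x : ℝ} (hs : 0 ≤ s) (hsx : s ≤ x) :
    ∫ t in (-x)..x, |t ^ 2 - s ^ 2| = 2 * x ^ 3 / 3 - 2 * s ^ 2 * x + 8 * s ^ 3 / 3 := by
  have hint : ∀ a b : ℝ, IntervalIntegrable (fun t => |t ^ 2 - s ^ 2|) volume a b :=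
    fun a b => (by fun_prop : Continuous _).intervalIntegrable a b
  rw [← integral_add_adjacent_intervals (hint (-x) (-s)) (hint (-s) x),
    ← integral_add_adjacent_intervals (hint (-s) s) (hint s x),
    integral_congr (a := -x) (b := -s) (g := fun t => t ^ 2 - s ^ 2) fun t ht => abs_of_nonneg ?_,
    integral_congr (a := -s) (b := s) (g := fun t => -(t ^ 2 - s ^ 2)) fun t ht => abs_of_nonpos ?_,
    integral_congr (a := s) (b := x) (g := fun t => t ^ 2 - s ^ 2) fun t ht => abs_of_nonneg ?_]
  · rw [intervalIntegral.integral_neg, integral_sq_sub_const, integral_sq_sub_const,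
      integral_sq_sub_const]
    ring
  all_goals
    rw [uIcc_of_le (by linarith)] at ht
    nlinarith [ht.1, ht.2]

noncomputable def twoPointKernel (x t : ℝ) : ℝ := (t ^ 2 + 1) / 2 - max |t| x

section twoPointKernel

variable {x t : ℝ}

theorem continuous_twoPointKernel (x : ℝ) : Continuous (twoPointKernel x) := by
  unfold twoPointKernel
  fun_prop

theorem twoPointKernel_of_le_neg (hx : 0 ≤ x) (ht : t ≤ -x) :
    twoPointKernel x t = (1 + t) ^ 2 / 2 := by
  rw [twoPointKernel, abs_of_nonpos (by linarith), max_eq_left (by linarith)]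
  ring

theorem twoPointKernel_of_abs_le (ht : |t| ≤ x) :
    twoPointKernel x t = (t ^ 2 - (2 * x - 1)) / 2 := by
  rw [twoPointKernel, max_eq_right ht]
  ring

theorem twoPointKernel_of_le (hx : 0 ≤ x) (ht : x ≤ t) :
    twoPointKernel x t = (1 - t) ^ 2 / 2 := by
  rw [twoPointKernel, abs_of_nonneg (by linarith), max_eq_left ht]
  ring

end twoPointKernel

theorem integral_sub_twoPoint_eq_integral_twoPointKernel_mul {f f' f'' : ℝ → ℝ} {x : ℝ}
    (hx0 : 0 ≤ x) (hx1 : x ≤ 1)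
    (hfc : ContinuousOn f (Icc (-1) 1)) (hf'c : ContinuousOn f' (Icc (-1) 1))
    (hf : ∀ t ∈ Ioo (-1) 1, HasDerivAt f (f' t) t)
    (hf' : ∀ t ∈ Ioo (-1) 1, HasDerivAt f' (f'' t) t)
    (hf'' : IntervalIntegrable f'' volume (-1) 1) :
    (∫ t in (-1)..1, f t) - (f (-x) + f x) = ∫ t in (-1)..1, twoPointKernel x t * f'' t := by
  have parts : ∀ a b, -1 ≤ a → a ≤ b → b ≤ 1 → ∀ w w' : ℝ → ℝ,
      (∀ t, HasDerivAt w (w' t) t) → (∀ t, HasDerivAt w' 1 t) →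
      ∫ t in a..b, w t * f'' t =
        (w b * f' b - w' b * f b) - (w a * f' a - w' a * f a) + ∫ t in a..b, f t := by
    intro a b ha hab hb w w' hw hw'
    have hsub : Icc a b ⊆ Icc (-1) 1 := Icc_subset_Icc ha hb
    have hsub' : Ioo a b ⊆ Ioo (-1) 1 := Ioo_subset_Ioo ha hb
    simpa using integral_mul_deriv_deriv_eq_deriv_deriv_mul (w'' := fun _ => 1) hab (hfc.mono hsub)
      (hf'c.mono hsub) (fun t ht => hf t (hsub' ht)) (fun t ht => hf' t (hsub' ht))
      (hf''.mono_set (by rwa [uIcc_of_le hab, uIcc_of_le (by norm_num)])) hw hw' continuous_const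
  have hw₁ : ∀ t : ℝ, HasDerivAt (fun t => (1 + t) ^ 2 / 2) (1 + t) t := fun t => by
    simpa using (((hasDerivAt_id t).const_add 1).pow 2).div_const 2
  have hw₂ : ∀ t : ℝ, HasDerivAt (fun t => (t ^ 2 - (2 * x - 1)) / 2) t t := fun t => by
    simpa using ((hasDerivAt_pow 2 t).sub_const (2 * x - 1)).div_const 2
  have hw₃ : ∀ t : ℝ, HasDerivAt (fun t => (1 - t) ^ 2 / 2) (t - 1) t := fun t => by
    refine ((((hasDerivAt_id t).const_sub 1).pow 2).div_const 2).congr_deriv ?_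
    simp only [Nat.cast_ofNat, id_eq]
    ring
  have hx : -1 ≤ -x := by linarith
  have hxx : -x ≤ x := by linarith
  have hK₁ : EqOn (fun t => twoPointKernel x t * f'' t) (fun t => (1 + t) ^ 2 / 2 * f'' t)
      (uIcc (-1) (-x)) := fun t ht => by
    rw [uIcc_of_le hx] at ht
    simp only [twoPointKernel_of_le_neg hx0 ht.2]
  have hK₂ : EqOn (fun t => twoPointKernel x t * f'' t)
      (fun t => (t ^ 2 - (2 * x - 1)) / 2 * f'' t) (uIcc (-x) x) := fun t ht => by
    rw [uIcc_of_le hxx] at ht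
    simp only [twoPointKernel_of_abs_le (abs_le.2 ht)]
  have hK₃ : EqOn (fun t => twoPointKernel x t * f'' t) (fun t => (1 - t) ^ 2 / 2 * f'' t)
      (uIcc x 1) := fun t ht => by
    rw [uIcc_of_le hx1] at ht
    simp only [twoPointKernel_of_le hx0 ht.1]
  rw [integral_eq_add_add_of_le hx hxx hx1 (hfc.intervalIntegrable_of_Icc (by norm_num)),
    integral_eq_add_add_of_le hx hxx hx1
      (hf''.continuousOn_mul (continuous_twoPointKernel x).continuousOn),
    integral_congr hK₁, integral_congr hK₂, integral_congr hK₃,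
    parts _ _ le_rfl hx (by linarith) _ _ hw₁ fun t => (hasDerivAt_id t).const_add 1,
    parts _ _ hx hxx hx1 _ _ hw₂ hasDerivAt_id,
    parts _ _ (by linarith) hx1 le_rfl _ _ hw₃ fun t => (hasDerivAt_id t).sub_const 1]
  ring

theorem integral_abs_twoPointKernel {x : ℝ} (hx0 : 0 ≤ x) (hx1 : x ≤ 1) :
    ∫ t in (-1)..1, |twoPointKernel x t| =
      if x ≤ 1 / 2 then 1 / 3 - x ^ 2
        else (1 / 3) * (4 * (2 * x - 1) ^ ((3:ℝ) / 2) + 1 - 3 * x ^ 2) := by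
  have hx : -1 ≤ -x := by linarith
  have hxx : -x ≤ x := by linarith
  have hleft : ∫ t in (-1)..(-x), (1 + t) ^ 2 / 2 = (1 - x) ^ 3 / 6 := by
    rw [intervalIntegral.integral_div, integral_comp_add_left (fun t => t ^ 2), integral_pow]
    ring
  have hright : ∫ t in x..1, (1 - t) ^ 2 / 2 = (1 - x) ^ 3 / 6 := by
    rw [intervalIntegral.integral_div, integral_comp_sub_left (fun t => t ^ 2), integral_pow]
    ring
  rw [integral_eq_add_add_of_le hx hxx hx1
      ((continuous_twoPointKernel x).abs.intervalIntegrable _ _),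
    integral_congr (a := -1) (b := -x) (g := fun t => (1 + t) ^ 2 / 2) fun t ht => by
      rw [uIcc_of_le hx] at ht
      simp only [twoPointKernel_of_le_neg hx0 ht.2, abs_eq_self]
      positivity,
    integral_congr (a := -x) (b := x) (g := fun t => |t ^ 2 - (2 * x - 1)| / 2) fun t ht => by
      rw [uIcc_of_le hxx] at ht
      simp only [twoPointKernel_of_abs_le (abs_le.2 ht), abs_div, abs_two],
    integral_congr (a := x) (b := 1) (g := fun t => (1 - t) ^ 2 / 2) fun t ht => by
      rw [uIcc_of_le hx1] at ht
      simp only [twoPointKernel_of_le hx0 ht.1, abs_eq_self]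
      positivity,
    hleft, hright, intervalIntegral.integral_div]
  split_ifs with hx2
  · rw [integral_congr (g := fun t => t ^ 2 - (2 * x - 1)) fun t _ => abs_of_nonneg (by
      nlinarith [sq_nonneg t]), integral_sq_sub_const]
    ring
  · obtain ⟨s, hs0, hs2⟩ : ∃ s ≥ 0, s ^ 2 = 2 * x - 1 :=
      ⟨√(2 * x - 1), Real.sqrt_nonneg _, Real.sq_sqrt (by linarith)⟩
    have hsx : s ≤ x := by nlinarith
    rw [← hs2, Real.rpow_div_two_eq_sqrt _ (sq_nonneg s), Real.sqrt_sq hs0, Real.rpow_ofNat,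
      integral_abs_sq_sub_sq hs0 hsx]
    linear_combination (-x) * hs2

theorem guessab_schmeisser_second_derivative (M x : ℝ) (hx : x ∈ Set.Icc (0:ℝ) 1)
    (f f' f'' : ℝ → ℝ)
    (hf : ∀ t ∈ Set.Icc (-1:ℝ) 1, HasDerivWithinAt f (f' t) (Set.Icc (-1) 1) t)
    (hf' : ∀ t ∈ Set.Icc (-1:ℝ) 1, HasDerivWithinAt f' (f'' t) (Set.Icc (-1) 1) t)
    (hbound : ∀ t ∈ Set.Icc (-1:ℝ) 1, |f'' t| ≤ M) :
    |(∫ t in (-1:ℝ)..1, f t) - (f (-x) + f x)| ≤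
      (if x ≤ 1 / 2 then 1 / 3 - x ^ 2
        else (1 / 3) * (4 * (2 * x - 1) ^ ((3:ℝ) / 2) + 1 - 3 * x ^ 2)) * M := by
  have hf_int : ∀ t ∈ Ioo (-1:ℝ) 1, HasDerivAt f (f' t) t := fun t ht =>
    (hf t (Ioo_subset_Icc_self ht)).hasDerivAt (Icc_mem_nhds ht.1 ht.2)
  have hf'_int : ∀ t ∈ Ioo (-1:ℝ) 1, HasDerivAt f' (f'' t) t := fun t ht =>
    (hf' t (Ioo_subset_Icc_self ht)).hasDerivAt (Icc_mem_nhds ht.1 ht.2)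
  have hf''_int : IntervalIntegrable f'' volume (-1) 1 :=
    intervalIntegrable_deriv_of_abs_le (by norm_num) hf'_int
      fun t ht => hbound t (Ioo_subset_Icc_self ht)
  rw [integral_sub_twoPoint_eq_integral_twoPointKernel_mul hx.1 hx.2
    (fun t ht => (hf t ht).continuousWithinAt) (fun t ht => (hf' t ht).continuousWithinAt)
    hf_int hf'_int hf''_int, ← integral_abs_twoPointKernel hx.1 hx.2, mul_comm]
  exact abs_integral_mul_le_of_abs_le (by norm_num) (continuous_twoPointKernel x) hbound
end

section
/- (Two-point Gauss–Legendre rule, third-derivative estimate) Let f : [-1,1] → ℝ be three times differentiable with |f'''(t)| ≤ M for all t ∈ [-1,1]. Then |∫_{-1}^1 f(t) dt - [f(-1/√3) + f(1/√3)]| ≤ ((9 - 4√3)/108) M. -/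
/-!
Peano kernel argument, with `c = 1/√3`. On each of `[-1, -c]`, `[-c, c]`, `[c, 1]`, integrating
`f` by parts three times against a cubic `K` with `K''' = -1` turns `∫ f` into `∫ K f'''` plus
boundary terms. For the kernels `-(t+1)³/6`, `(c - 1/2) t - t³/6` and `-(t-1)³/6` the boundary
terms vanish at `±1`; at `±c` the values of `K` and `K'` match (the values because `c² = 1/3`)
while `K''` jumps by `1`, which leaves exactly `f(-c) + f(c)`. So the error is `∫ K f'''`, of
size at most `M ∫ |K| = (9 - 4√3) M / 108`.
-/

open MeasureTheory intervalIntegral Set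

theorem intervalIntegrable_of_hasDerivAt_of_abs_le {g g' : ℝ → ℝ} {a b C : ℝ} (hab : a ≤ b)
    (hg : ∀ t ∈ Ioo a b, HasDerivAt g (g' t) t) (hC : ∀ t ∈ Ioo a b, |g' t| ≤ C) :
    IntervalIntegrable g' volume a b := by
  rw [intervalIntegrable_iff_integrableOn_Ioo_of_le hab]
  have hderiv : ∀ᵐ t ∂volume.restrict (Ioo a b), deriv g t = g' t :=
    (ae_restrict_mem measurableSet_Ioo).mono fun t ht => (hg t ht).deriv
  refine Integrable.mono' (integrable_const C) ?_ ?_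
  · exact (measurable_deriv g).aestronglyMeasurable.congr hderiv
  · exact (ae_restrict_mem measurableSet_Ioo).mono fun t ht => hC t ht

theorem continuousOn_and_hasDerivAt_of_hasDerivWithinAt_Icc {g g' : ℝ → ℝ} {a b : ℝ}
    (h : ∀ t ∈ Icc a b, HasDerivWithinAt g (g' t) (Icc a b) t) :
    ContinuousOn g (Icc a b) ∧ ∀ t ∈ Ioo a b, HasDerivAt g (g' t) t :=
  ⟨fun t ht => (h t ht).continuousWithinAt,
    fun t ht => (h t (Ioo_subset_Icc_self ht)).hasDerivAt (Icc_mem_nhds ht.1 ht.2)⟩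

theorem integral_eq_integral_cubic_mul_sub {f f' f'' f''' : ℝ → ℝ} {a b : ℝ} (p q : ℝ) (hab : a ≤ b)
    (hf : ContinuousOn f (Icc a b)) (hf' : ContinuousOn f' (Icc a b))
    (hf'' : ContinuousOn f'' (Icc a b)) (hdf : ∀ t ∈ Ioo a b, HasDerivAt f (f' t) t)
    (hdf' : ∀ t ∈ Ioo a b, HasDerivAt f' (f'' t) t)
    (hdf'' : ∀ t ∈ Ioo a b, HasDerivAt f'' (f''' t) t)
    (hf''' : IntervalIntegrable f''' volume a b) :
    ∫ t in a..b, f t = (∫ t in a..b, (q * t - (t - p) ^ 3 / 6) * f''' t) -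
      (((q * b - (b - p) ^ 3 / 6) * f'' b - (q - (b - p) ^ 2 / 2) * f' b + (p - b) * f b) -
        ((q * a - (a - p) ^ 3 / 6) * f'' a - (q - (a - p) ^ 2 / 2) * f' a + (p - a) * f a)) := by
  have hK (t : ℝ) : HasDerivAt (fun t => q * t - (t - p) ^ 3 / 6) (q - (t - p) ^ 2 / 2) t :=
    (((hasDerivAt_id' t).const_mul q).fun_sub
      (((hasDerivAt_pow 3 (t - p)).comp_sub_const t p).div_const 6)).congr_deriv (by norm_num; ring)
  have hK' (t : ℝ) : HasDerivAt (fun t => q - (t - p) ^ 2 / 2) (p - t) t :=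
    ((((hasDerivAt_pow 2 (t - p)).comp_sub_const t p).div_const 2).const_sub q).congr_deriv
      (by norm_num)
  have hK'' (t : ℝ) : HasDerivAt (fun t => p - t) (-1) t := (hasDerivAt_id' t).const_sub p
  have hKf''' : IntervalIntegrable (fun t => (q * t - (t - p) ^ 3 / 6) * f''' t) volume a b :=
    hf'''.continuousOn_mul (by fun_prop)
  have hfint : IntervalIntegrable f volume a b := (uIcc_of_le hab ▸ hf).intervalIntegrable
  have hftc := integral_eq_sub_of_hasDerivAt_of_le hab (by fun_prop)
    (fun t ht => ((((hK t).fun_mul (hdf'' t ht)).fun_sub ((hK' t).fun_mul (hdf' t ht))).fun_add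
      ((hK'' t).fun_mul (hdf t ht))).congr_deriv (by ring)) (hKf'''.sub hfint)
  rw [intervalIntegral.integral_sub hKf''' hfint] at hftc
  linarith

theorem integral_sub_gauss_eq_kernel_integrals {f f' f'' f''' : ℝ → ℝ} {c : ℝ}
    (hc : c ^ 2 = 1 / 3) (hc0 : 0 ≤ c) (hf : ContinuousOn f (Icc (-1) 1))
    (hf' : ContinuousOn f' (Icc (-1) 1)) (hf'' : ContinuousOn f'' (Icc (-1) 1))
    (hdf : ∀ t ∈ Ioo (-1:ℝ) 1, HasDerivAt f (f' t) t)
    (hdf' : ∀ t ∈ Ioo (-1:ℝ) 1, HasDerivAt f' (f'' t) t)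
    (hdf'' : ∀ t ∈ Ioo (-1:ℝ) 1, HasDerivAt f'' (f''' t) t)
    (hf''' : IntervalIntegrable f''' volume (-1) 1) :
    (∫ t in (-1:ℝ)..1, f t) - (f (-c) + f c) =
      (∫ t in (-1:ℝ)..(-c), -((t + 1) ^ 3 / 6) * f''' t) +
        (∫ t in (-c)..c, ((c - 1 / 2) * t - t ^ 3 / 6) * f''' t) +
          ∫ t in c..1, -((t - 1) ^ 3 / 6) * f''' t := by
  have hc1 : c ≤ 1 := by nlinarith
  have piece (p q a b : ℝ) (ha : -1 ≤ a) (hab : a ≤ b) (hb : b ≤ 1) :=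
    integral_eq_integral_cubic_mul_sub p q hab (hf.mono (Icc_subset_Icc ha hb))
      (hf'.mono (Icc_subset_Icc ha hb)) (hf''.mono (Icc_subset_Icc ha hb))
      (fun t ht => hdf t (Ioo_subset_Ioo ha hb ht)) (fun t ht => hdf' t (Ioo_subset_Ioo ha hb ht))
      (fun t ht => hdf'' t (Ioo_subset_Ioo ha hb ht))
      (hf'''.mono_set <| by
        rw [uIcc_of_le hab, uIcc_of_le (by norm_num)]; exact Icc_subset_Icc ha hb)
  have hfint (a b : ℝ) (ha : -1 ≤ a) (hab : a ≤ b) (hb : b ≤ 1) : IntervalIntegrable f volume a b :=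
    (hf.mono (uIcc_of_le hab ▸ Icc_subset_Icc ha hb)).intervalIntegrable
  rw [← integral_add_adjacent_intervals (hfint (-1) (-c) le_rfl (by linarith) (by linarith))
      (hfint (-c) 1 (by linarith) (by linarith) le_rfl),
    ← integral_add_adjacent_intervals (hfint (-c) c (by linarith) (by linarith) (by linarith))
      (hfint c 1 (by linarith) hc1 le_rfl),
    piece (-1) 0 (-1) (-c) le_rfl (by linarith) (by linarith),
    piece 0 (c - 1 / 2) (-c) c (by linarith) (by linarith) (by linarith),
    piece 1 0 c 1 (by linarith) hc1 le_rfl]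
  simp only [zero_mul, zero_sub, sub_neg_eq_add, sub_zero]
  linear_combination (-(f'' (-c) + f'' c) / 2) * hc

theorem abs_integral_mul_le_mul_integral_abs {K g : ℝ → ℝ} {a b M : ℝ} (hab : a ≤ b)
    (hK : ContinuousOn K (Icc a b)) (hg : ∀ t ∈ Icc a b, |g t| ≤ M) :
    |∫ t in a..b, K t * g t| ≤ M * ∫ t in a..b, |K t| := by
  rw [← Real.norm_eq_abs, ← intervalIntegral.integral_const_mul]
  refine intervalIntegral.norm_integral_le_of_norm_le hab
    (Filter.Eventually.of_forall fun t ht => ?_) ?_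
  · rw [Real.norm_eq_abs, abs_mul, mul_comm M]
    exact mul_le_mul_of_nonneg_left (hg t (Ioc_subset_Icc_self ht)) (abs_nonneg _)
  · exact ((uIcc_of_le hab ▸ hK).abs.const_smul M).intervalIntegrable

theorem integral_abs_gaussKernel_left {c : ℝ} (hc : c ≤ 1) :
    ∫ t in (-1:ℝ)..(-c), |-((t + 1) ^ 3 / 6)| = (1 - c) ^ 4 / 24 := by
  rw [integral_congr (g := fun t => (t + 1) ^ 3 / 6) fun t ht => ?_]
  · simp only [intervalIntegral.integral_div, integral_comp_add_right (fun x => x ^ 3),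
      integral_pow]
    ring
  · rw [uIcc_of_le (by linarith)] at ht
    rw [abs_neg, abs_of_nonneg (div_nonneg (pow_nonneg (by linarith [ht.1]) 3) (by norm_num))]

theorem integral_abs_gaussKernel_middle {c : ℝ} (hc : c ^ 2 = 1 / 3) (hc0 : 0 ≤ c) :
    ∫ t in (-c)..c, |(c - 1 / 2) * t - t ^ 3 / 6| = c / 3 - 19 / 108 := by
  have hcont : Continuous fun t : ℝ => |(c - 1 / 2) * t - t ^ 3 / 6| := by fun_prop
  have hhalf : ∫ t in (0:ℝ)..c, |(c - 1 / 2) * t - t ^ 3 / 6| = c / 6 - 19 / 216 := by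
    rw [integral_congr (g := fun t => (c - 1 / 2) * t - t ^ 3 / 6) fun t ht => ?_]
    · rw [intervalIntegral.integral_sub (Continuous.intervalIntegrable (by fun_prop) _ _)
        (Continuous.intervalIntegrable (by fun_prop) _ _), intervalIntegral.integral_const_mul,
        intervalIntegral.integral_div, integral_id, integral_pow]
      linear_combination (c / 2 - 1 / 4 - c ^ 2 / 24 - 1 / 72) * hc
    · rw [uIcc_of_le hc0] at ht
      have hsq : t ^ 2 ≤ 1 / 3 := hc ▸ pow_le_pow_left₀ ht.1 ht.2 2
      -- the kernel is `t * (c - 1/2 - t²/6)`, and `c - 1/2 - 1/18 ≥ 0`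
      have h59 : 5 / 9 ≤ c := by nlinarith
      exact abs_of_nonneg (by nlinarith [ht.1])
  have hsymm : ∫ t in (-c)..0, |(c - 1 / 2) * t - t ^ 3 / 6| =
      ∫ t in (0:ℝ)..c, |(c - 1 / 2) * t - t ^ 3 / 6| := by
    calc ∫ t in (-c)..0, |(c - 1 / 2) * t - t ^ 3 / 6|
        = ∫ t in (-c)..(-0), |(c - 1 / 2) * t - t ^ 3 / 6| := by rw [neg_zero]
      _ = ∫ t in (0:ℝ)..c, |(c - 1 / 2) * -t - (-t) ^ 3 / 6| := (integral_comp_neg _).symm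
      _ = ∫ t in (0:ℝ)..c, |(c - 1 / 2) * t - t ^ 3 / 6| := by
        congr 1; ext t; rw [← abs_neg]; ring_nf
  rw [← integral_add_adjacent_intervals (hcont.intervalIntegrable _ _)
    (hcont.intervalIntegrable _ _), hsymm, hhalf]
  ring

theorem integral_abs_gaussKernel_right {c : ℝ} (hc : c ≤ 1) :
    ∫ t in c..1, |-((t - 1) ^ 3 / 6)| = (1 - c) ^ 4 / 24 := by
  rw [integral_congr (g := fun t => -((t - 1) ^ 3 / 6)) fun t ht => ?_]
  · simp only [intervalIntegral.integral_neg, intervalIntegral.integral_div,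
      integral_comp_sub_right (fun x => x ^ 3), integral_pow]
    ring
  · rw [uIcc_of_le (by linarith)] at ht
    refine abs_of_nonneg (neg_nonneg.2 (div_nonpos_of_nonpos_of_nonneg ?_ (by norm_num)))
    exact Odd.pow_nonpos (by decide) (by linarith [ht.2])

theorem two_point_gauss_legendre_third_derivative (M : ℝ) (f f' f'' f''' : ℝ → ℝ)
    (hf : ∀ t ∈ Set.Icc (-1:ℝ) 1, HasDerivWithinAt f (f' t) (Set.Icc (-1) 1) t)
    (hf' : ∀ t ∈ Set.Icc (-1:ℝ) 1, HasDerivWithinAt f' (f'' t) (Set.Icc (-1) 1) t)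
    (hf'' : ∀ t ∈ Set.Icc (-1:ℝ) 1, HasDerivWithinAt f'' (f''' t) (Set.Icc (-1) 1) t)
    (hbound : ∀ t ∈ Set.Icc (-1:ℝ) 1, |f''' t| ≤ M) :
    |(∫ t in (-1:ℝ)..1, f t) - (f (-(1 / Real.sqrt 3)) + f (1 / Real.sqrt 3))| ≤
      ((9 - 4 * Real.sqrt 3) / 108) * M := by
  have hsqrt : Real.sqrt 3 = 3 * (1 / Real.sqrt 3) := by
    rw [mul_one_div, eq_div_iff (by positivity), Real.mul_self_sqrt (by norm_num)]
  set c := 1 / Real.sqrt 3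
  have hc : c ^ 2 = 1 / 3 := by rw [div_pow, Real.sq_sqrt (by norm_num)]; norm_num
  have hc0 : 0 ≤ c := by positivity
  have hc1 : c ≤ 1 := by nlinarith
  obtain ⟨hfc, hdf⟩ := continuousOn_and_hasDerivAt_of_hasDerivWithinAt_Icc hf
  obtain ⟨hfc', hdf'⟩ := continuousOn_and_hasDerivAt_of_hasDerivWithinAt_Icc hf'
  obtain ⟨hfc'', hdf''⟩ := continuousOn_and_hasDerivAt_of_hasDerivWithinAt_Icc hf''
  have hf''' : IntervalIntegrable f''' volume (-1) 1 := intervalIntegrable_of_hasDerivAt_of_abs_le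
    (by norm_num) hdf'' fun t ht => hbound t (Ioo_subset_Icc_self ht)
  have hbound' (a b : ℝ) (ha : -1 ≤ a) (hb : b ≤ 1) : ∀ t ∈ Icc a b, |f''' t| ≤ M :=
    fun t ht => hbound t (Icc_subset_Icc ha hb ht)
  rw [integral_sub_gauss_eq_kernel_integrals hc hc0 hfc hfc' hfc'' hdf hdf' hdf'' hf''']
  calc _ ≤ _ := abs_add_three _ _ _
    _ ≤ M * ((1 - c) ^ 4 / 24) + M * (c / 3 - 19 / 108) + M * ((1 - c) ^ 4 / 24) := by
        gcongr ?_ + ?_ + ?_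
        · exact (abs_integral_mul_le_mul_integral_abs (by linarith) (by fun_prop)
            (hbound' (-1) (-c) le_rfl (by linarith))).trans_eq
            (by rw [integral_abs_gaussKernel_left hc1])
        · exact (abs_integral_mul_le_mul_integral_abs (by linarith) (by fun_prop)
            (hbound' (-c) c (by linarith) hc1)).trans_eq
            (by rw [integral_abs_gaussKernel_middle hc hc0])
        · exact (abs_integral_mul_le_mul_integral_abs hc1 (by fun_prop)
            (hbound' c 1 (by linarith) le_rfl)).trans_eq
            (by rw [integral_abs_gaussKernel_right hc1])
    _ = ((9 - 4 * Real.sqrt 3) / 108) * M := by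
        rw [hsqrt]; clear_value c; linear_combination M * (c ^ 2 - 4 * c + 19 / 3) / 12 * hc
end

section
/- (Radau two-point rule estimates, after Franjić) Let f : [-1,1] → ℝ be three times differentiable with |f'''(t)| ≤ M for all t ∈ [-1,1]. Then |∫_{-1}^1 f(t) dt - [(1/2) f(-1) + (3/2) f(1/3)]| ≤ (2/27) M. Moreover, if |f'(t)| ≤ M₀' on [-1,1] then the left-hand side is at most (25/36) M₀', and if |f''(t)| ≤ M₁' on [-1,1] then it is at most (1/6) M₁'. -/
/-!
Peano kernel argument. Integrating by parts on `[-1, 1/3]` and `[1/3, 1]` against successive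
polynomial primitives `K₁, K₂, K₃` of `1` gives `E f = -∫ K₁ f' = ∫ K₂ f'' = -∫ K₃ f'''` for the
error `E f = ∫ f - Q f`. In the first step the boundary terms are exactly the weights `1/2` at `-1`
and `3/2` at `1/3`; in the later ones they vanish because the rule is exact in degree `≤ 2`.
Hence `|E f| ≤ sup |f⁽ⁿ⁾| * ∫ |Kₙ|`, and `∫ |Kₙ| = 25/36, 1/6, 2/27` is computed from `Kₙ₊₁` on
the intervals where `Kₙ` has constant sign.
-/

open MeasureTheory intervalIntegral Set
open scoped Nat

theorem hasDerivAt_pow_div_factorial (c : ℝ) (n : ℕ) (t : ℝ) :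
    HasDerivAt (fun x => (x + c) ^ (n + 1) / (n + 1)!) ((t + c) ^ n / n !) t := by
  refine ((((hasDerivAt_id t).add_const c).pow (n + 1)).div_const ((n + 1)! : ℝ)).congr_deriv ?_
  rw [Nat.factorial_succ, Nat.cast_mul]
  field_simp
  simp

theorem integral_mul_deriv_eq_deriv_mul_of_subset_Icc {u u' v v' : ℝ → ℝ} {a b c d : ℝ}
    (hab : a ≤ b) (hsub : Icc a b ⊆ Icc c d) (hu : ∀ t, HasDerivAt u (u' t) t)
    (hu' : Continuous u') (hv : ∀ t ∈ Icc c d, HasDerivWithinAt v (v' t) (Icc c d) t)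
    (hv' : IntervalIntegrable v' volume a b) :
    ∫ t in a..b, u t * v' t = u b * v b - u a * v a - ∫ t in a..b, u' t * v t := by
  rw [← uIcc_of_le hab] at hsub
  exact integral_mul_deriv_eq_deriv_mul_of_hasDerivWithinAt (fun t _ => (hu t).hasDerivWithinAt)
    (fun t ht => (hv t (hsub ht)).mono hsub) (hu'.intervalIntegrable a b) hv'

theorem abs_integral_mul_le_mul_integral_abs_s16 {k g : ℝ → ℝ} {a b C : ℝ} (hab : a ≤ b)
    (hk : Continuous k) (hC : ∀ t ∈ Icc a b, |g t| ≤ C) :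
    |∫ t in a..b, k t * g t| ≤ C * ∫ t in a..b, |k t| := by
  rw [← intervalIntegral.integral_const_mul, ← Real.norm_eq_abs]
  refine norm_integral_le_of_norm_le hab (ae_of_all _ fun t ht => ?_)
    ((hk.abs.const_mul C).intervalIntegrable a b)
  rw [Real.norm_eq_abs, abs_mul, mul_comm C]
  exact mul_le_mul_of_nonneg_left (hC t (Ioc_subset_Icc_self ht)) (abs_nonneg _)

theorem integral_abs_eq_abs_sub_of_hasDerivAt {K k : ℝ → ℝ} {a b : ℝ} (hab : a ≤ b)
    (hK : ∀ t, HasDerivAt K (k t) t) (hk : Continuous k)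
    (hsign : (∀ t ∈ Icc a b, 0 ≤ k t) ∨ ∀ t ∈ Icc a b, k t ≤ 0) :
    ∫ t in a..b, |k t| = |K b - K a| := by
  have hftc : ∫ t in a..b, k t = K b - K a :=
    integral_eq_sub_of_hasDerivAt (fun t _ => hK t) (hk.intervalIntegrable a b)
  rw [← uIcc_of_le hab] at hsign
  rcases hsign with hpos | hneg
  · rw [integral_congr fun t ht => abs_of_nonneg (hpos t ht), hftc, abs_of_nonneg]
    rw [← hftc]
    exact integral_nonneg hab fun t ht => hpos t (Icc_subset_uIcc ht)
  · rw [integral_congr fun t ht => abs_of_nonpos (hneg t ht), intervalIntegral.integral_neg, hftc,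
      abs_of_nonpos]
    rw [← hftc, ← neg_nonneg, ← intervalIntegral.integral_neg]
    exact integral_nonneg hab fun t ht => neg_nonneg.2 (hneg t (Icc_subset_uIcc ht))

theorem intervalIntegrable_deriv_of_hasDerivWithinAt_of_abs_le {g g' : ℝ → ℝ} {a b C : ℝ}
    (hab : a ≤ b) (hg : ∀ t ∈ Icc a b, HasDerivWithinAt g (g' t) (Icc a b) t)
    (hC : ∀ t ∈ Icc a b, |g' t| ≤ C) : IntervalIntegrable g' volume a b := by
  have hderiv : EqOn (deriv g) g' (Ioo a b) := fun t ht =>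
    ((hg t (Ioo_subset_Icc_self ht)).hasDerivAt (Icc_mem_nhds ht.1 ht.2)).deriv
  rw [intervalIntegrable_iff_integrableOn_Ioo_of_le hab]
  refine (IntegrableOn.of_bound measure_Ioo_lt_top (measurable_deriv g).aestronglyMeasurable C ?_)
    |>.congr_fun hderiv measurableSet_Ioo
  filter_upwards [ae_restrict_mem measurableSet_Ioo] with t ht
  rw [hderiv ht]
  exact hC t (Ioo_subset_Icc_self ht)

theorem intervalIntegrable_of_hasDerivWithinAt_Icc {g g' : ℝ → ℝ} {a b : ℝ} (hab : a ≤ b)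
    (hg : ∀ t ∈ Icc a b, HasDerivWithinAt g (g' t) (Icc a b) t) : IntervalIntegrable g volume a b :=
  ContinuousOn.intervalIntegrable_of_Icc hab fun t ht => (hg t ht).continuousWithinAt

/-- Up to the sign `(-1)ⁿ`, `radauKernelLeft n` and `radauKernelRight n` are the pieces on
`[-1, 1/3]` and `[1/3, 1]` of the `n`-th Peano kernel of the rule (`1 ≤ n ≤ 3`). -/
noncomputable def radauKernelLeft : ℕ → ℝ → ℝ
  | 0, _ => 1
  | n + 1, t => (t + 1) ^ (n + 1) / (n + 1)! - (t + 1) ^ n / n ! / 2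

noncomputable def radauKernelRight (n : ℕ) (t : ℝ) : ℝ := (t - 1) ^ n / n !

noncomputable def radauPairing (n : ℕ) (g : ℝ → ℝ) : ℝ :=
  (∫ t in (-1:ℝ)..1 / 3, radauKernelLeft n t * g t) +
    ∫ t in (1 / 3:ℝ)..1, radauKernelRight n t * g t

noncomputable def radauKernelNorm (n : ℕ) : ℝ :=
  (∫ t in (-1:ℝ)..1 / 3, |radauKernelLeft n t|) + ∫ t in (1 / 3:ℝ)..1, |radauKernelRight n t|

noncomputable def radauError (f : ℝ → ℝ) : ℝ :=
  (∫ t in (-1:ℝ)..1, f t) - ((1 / 2) * f (-1) + (3 / 2) * f (1 / 3))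

theorem hasDerivAt_radauKernelLeft (n : ℕ) (t : ℝ) :
    HasDerivAt (radauKernelLeft (n + 1)) (radauKernelLeft n t) t := by
  cases n with
  | zero =>
    have h : radauKernelLeft 1 = fun x => x + 1 / 2 := by
      funext x; norm_num [radauKernelLeft]; ring
    rw [h]
    exact (hasDerivAt_id t).add_const _
  | succ n =>
    exact (hasDerivAt_pow_div_factorial 1 (n + 1) t).sub
      ((hasDerivAt_pow_div_factorial 1 n t).div_const 2)

theorem hasDerivAt_radauKernelRight (n : ℕ) (t : ℝ) :
    HasDerivAt (radauKernelRight (n + 1)) (radauKernelRight n t) t :=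
  hasDerivAt_pow_div_factorial (-1) n t

theorem continuous_radauKernelLeft (n : ℕ) : Continuous (radauKernelLeft n) := by
  cases n <;> unfold radauKernelLeft <;> fun_prop

theorem continuous_radauKernelRight (n : ℕ) : Continuous (radauKernelRight n) := by
  unfold radauKernelRight; fun_prop

theorem radauPairing_eq_sub_radauPairing_succ (n : ℕ) {g g' : ℝ → ℝ}
    (hg : ∀ t ∈ Icc (-1:ℝ) 1, HasDerivWithinAt g (g' t) (Icc (-1) 1) t)
    (hg' : IntervalIntegrable g' volume (-1) 1) :
    radauPairing n g =
      (radauKernelLeft (n + 1) (1 / 3) - radauKernelRight (n + 1) (1 / 3)) * g (1 / 3) -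
        radauKernelLeft (n + 1) (-1) * g (-1) - radauPairing (n + 1) g' := by
  have hleft := integral_mul_deriv_eq_deriv_mul_of_subset_Icc (a := -1) (b := 1 / 3) (by norm_num)
    (Icc_subset_Icc le_rfl (by norm_num)) (hasDerivAt_radauKernelLeft n)
    (continuous_radauKernelLeft n) hg
    (hg'.mono_set (uIcc_subset_uIcc (by norm_num [mem_uIcc]) (by norm_num [mem_uIcc])))
  have hright := integral_mul_deriv_eq_deriv_mul_of_subset_Icc (a := 1 / 3) (b := 1) (by norm_num)
    (Icc_subset_Icc (by norm_num) le_rfl) (hasDerivAt_radauKernelRight n)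
    (continuous_radauKernelRight n) hg
    (hg'.mono_set (uIcc_subset_uIcc (by norm_num [mem_uIcc]) (by norm_num [mem_uIcc])))
  have hK : radauKernelRight (n + 1) 1 = 0 := by simp [radauKernelRight]
  rw [hK] at hright
  unfold radauPairing
  linarith

theorem integral_eq_radauPairing_zero {f : ℝ → ℝ} (hf : IntervalIntegrable f volume (-1) 1) :
    ∫ t in (-1:ℝ)..1, f t = radauPairing 0 f := by
  simp only [radauPairing, radauKernelLeft, radauKernelRight, pow_zero, Nat.factorial_zero,
    Nat.cast_one, div_one, one_mul]
  exact (integral_add_adjacent_intervals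
    (hf.mono_set (uIcc_subset_uIcc (by norm_num [mem_uIcc]) (by norm_num [mem_uIcc])))
    (hf.mono_set (uIcc_subset_uIcc (by norm_num [mem_uIcc]) (by norm_num [mem_uIcc])))).symm

theorem radauError_eq_neg_radauPairing_one {f f' : ℝ → ℝ}
    (hf : ∀ t ∈ Icc (-1:ℝ) 1, HasDerivWithinAt f (f' t) (Icc (-1) 1) t)
    (hf' : IntervalIntegrable f' volume (-1) 1) :
    radauError f = -radauPairing 1 f' := by
  rw [radauError, integral_eq_radauPairing_zero (intervalIntegrable_of_hasDerivWithinAt_Icc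
    (by norm_num) hf), radauPairing_eq_sub_radauPairing_succ 0 hf hf']
  norm_num [radauKernelLeft, radauKernelRight]
  ring

/-- The boundary terms vanish: `K₂, K₃` vanish at `-1` and are continuous at the node `1/3`. -/
theorem radauPairing_eq_neg_radauPairing_succ {n : ℕ} (hn : n = 1 ∨ n = 2) {g g' : ℝ → ℝ}
    (hg : ∀ t ∈ Icc (-1:ℝ) 1, HasDerivWithinAt g (g' t) (Icc (-1) 1) t)
    (hg' : IntervalIntegrable g' volume (-1) 1) :
    radauPairing n g = -radauPairing (n + 1) g' := by
  rcases hn with rfl | rfl <;> rw [radauPairing_eq_sub_radauPairing_succ _ hg hg'] <;>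
    norm_num [radauKernelLeft, radauKernelRight]

theorem abs_radauPairing_le (n : ℕ) {g : ℝ → ℝ} {C : ℝ} (hC : ∀ t ∈ Icc (-1:ℝ) 1, |g t| ≤ C) :
    |radauPairing n g| ≤ C * radauKernelNorm n := by
  rw [radauPairing, radauKernelNorm, mul_add]
  refine (abs_add_le _ _).trans (add_le_add ?_ ?_)
  · exact abs_integral_mul_le_mul_integral_abs_s16 (by norm_num) (continuous_radauKernelLeft n)
      fun t ht => hC t ⟨ht.1, by linarith [ht.2]⟩
  · exact abs_integral_mul_le_mul_integral_abs_s16 (by norm_num) (continuous_radauKernelRight n)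
      fun t ht => hC t ⟨by linarith [ht.1], ht.2⟩

theorem integral_abs_radauKernelLeft (n : ℕ) {a b : ℝ} (hab : a ≤ b)
    (hsign : (∀ t ∈ Icc a b, 0 ≤ radauKernelLeft n t) ∨ ∀ t ∈ Icc a b, radauKernelLeft n t ≤ 0) :
    ∫ t in a..b, |radauKernelLeft n t| = |radauKernelLeft (n + 1) b - radauKernelLeft (n + 1) a| :=
  integral_abs_eq_abs_sub_of_hasDerivAt hab (hasDerivAt_radauKernelLeft n)
    (continuous_radauKernelLeft n) hsign

theorem integral_abs_radauKernelRight (n : ℕ) {a b : ℝ} (hab : a ≤ b)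
    (hsign : (∀ t ∈ Icc a b, 0 ≤ radauKernelRight n t) ∨ ∀ t ∈ Icc a b, radauKernelRight n t ≤ 0) :
    ∫ t in a..b, |radauKernelRight n t| =
      |radauKernelRight (n + 1) b - radauKernelRight (n + 1) a| :=
  integral_abs_eq_abs_sub_of_hasDerivAt hab (hasDerivAt_radauKernelRight n)
    (continuous_radauKernelRight n) hsign

theorem radauKernelNorm_one : radauKernelNorm 1 = 25 / 36 := by
  have hint : ∀ a b : ℝ, IntervalIntegrable (fun t => |radauKernelLeft 1 t|) volume a b :=
    fun a b => (continuous_radauKernelLeft 1).abs.intervalIntegrable a b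
  rw [radauKernelNorm, ← integral_add_adjacent_intervals (hint (-1) (-1 / 2)) (hint _ _),
    integral_abs_radauKernelLeft 1 (by norm_num) (Or.inr fun t ht => ?_),
    integral_abs_radauKernelLeft 1 (by norm_num) (Or.inl fun t ht => ?_),
    integral_abs_radauKernelRight 1 (by norm_num) (Or.inr fun t ht => ?_)]
  · norm_num [radauKernelLeft, radauKernelRight]
  all_goals norm_num [radauKernelLeft, radauKernelRight]; linarith [ht.1, ht.2]

theorem radauKernelNorm_two : radauKernelNorm 2 = 1 / 6 := by
  have hint : ∀ a b : ℝ, IntervalIntegrable (fun t => |radauKernelLeft 2 t|) volume a b :=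
    fun a b => (continuous_radauKernelLeft 2).abs.intervalIntegrable a b
  rw [radauKernelNorm, ← integral_add_adjacent_intervals (hint (-1) 0) (hint _ _),
    integral_abs_radauKernelLeft 2 (by norm_num) (Or.inr fun t ht => ?_),
    integral_abs_radauKernelLeft 2 (by norm_num) (Or.inl fun t ht => ?_),
    integral_abs_radauKernelRight 2 (by norm_num) (Or.inl fun t ht => ?_)]
  · norm_num [radauKernelLeft, radauKernelRight]
  all_goals norm_num [radauKernelLeft, radauKernelRight]; nlinarith [ht.1, ht.2]

theorem radauKernelNorm_three : radauKernelNorm 3 = 2 / 27 := by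
  rw [radauKernelNorm, integral_abs_radauKernelLeft 3 (by norm_num) (Or.inr fun t ht => ?_),
    integral_abs_radauKernelRight 3 (by norm_num) (Or.inr fun t ht => ?_)]
  · norm_num [radauKernelLeft, radauKernelRight]
  all_goals norm_num [radauKernelLeft, radauKernelRight]; nlinarith [ht.1, ht.2, sq_nonneg (t - 1)]

theorem radau_two_point_estimates (M M₀' M₁' : ℝ) (f f' f'' f''' : ℝ → ℝ)
    (hf : ∀ t ∈ Set.Icc (-1:ℝ) 1, HasDerivWithinAt f (f' t) (Set.Icc (-1) 1) t)
    (hf' : ∀ t ∈ Set.Icc (-1:ℝ) 1, HasDerivWithinAt f' (f'' t) (Set.Icc (-1) 1) t)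
    (hf'' : ∀ t ∈ Set.Icc (-1:ℝ) 1, HasDerivWithinAt f'' (f''' t) (Set.Icc (-1) 1) t)
    (hbound : ∀ t ∈ Set.Icc (-1:ℝ) 1, |f''' t| ≤ M) :
    |(∫ t in (-1:ℝ)..1, f t) - ((1 / 2) * f (-1) + (3 / 2) * f (1 / 3))| ≤ (2 / 27) * M ∧
    ((∀ t ∈ Set.Icc (-1:ℝ) 1, |f' t| ≤ M₀') →
      |(∫ t in (-1:ℝ)..1, f t) - ((1 / 2) * f (-1) + (3 / 2) * f (1 / 3))| ≤ (25 / 36) * M₀') ∧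
    ((∀ t ∈ Set.Icc (-1:ℝ) 1, |f'' t| ≤ M₁') →
      |(∫ t in (-1:ℝ)..1, f t) - ((1 / 2) * f (-1) + (3 / 2) * f (1 / 3))| ≤ (1 / 6) * M₁') := by
  have h₁ := radauError_eq_neg_radauPairing_one hf
    (intervalIntegrable_of_hasDerivWithinAt_Icc (by norm_num) hf')
  have h₂ := radauPairing_eq_neg_radauPairing_succ (Or.inl rfl) hf'
    (intervalIntegrable_of_hasDerivWithinAt_Icc (by norm_num) hf'')
  have h₃ := radauPairing_eq_neg_radauPairing_succ (Or.inr rfl) hf''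
    (intervalIntegrable_deriv_of_hasDerivWithinAt_of_abs_le (by norm_num) hf'' hbound)
  change |radauError f| ≤ _ ∧ (_ → |radauError f| ≤ _) ∧ (_ → |radauError f| ≤ _)
  refine ⟨?_, fun hM₀ => ?_, fun hM₁ => ?_⟩
  · rw [h₁, h₂, h₃, neg_neg, abs_neg, ← radauKernelNorm_three, mul_comm]
    exact abs_radauPairing_le 3 hbound
  · rw [h₁, abs_neg, ← radauKernelNorm_one, mul_comm]
    exact abs_radauPairing_le 1 hM₀
  · rw [h₁, h₂, neg_neg, ← radauKernelNorm_two, mul_comm]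
    exact abs_radauPairing_le 2 hM₁
end

section
/- (Alomari's general two-point inequality) Let -1 ≤ x ≤ λ ≤ y ≤ 1 and let f : [-1,1] → ℝ be differentiable with |f'(t)| ≤ M for all t ∈ [-1,1]. Then |∫_{-1}^1 f(t) dt - [(1+λ) f(x) + (1-λ) f(y)]| ≤ { (1/4)[(1-λ)² + (1+λ)²] + (x + (1-λ)/2)² + (y - (1+λ)/2)² } M. -/
open MeasureTheory intervalIntegral Set

/-!
Split `[-1, 1]` at `λ`, so that `(1 + λ) f(x)` and `(1 - λ) f(y)` are the one-point rules for
`∫_{-1}^{λ} f` and `∫_{λ}^{1} f` at the nodes `x` and `y`. The mean value inequality gives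
`|f t - f p| ≤ M |t - p|`, and `∫_a^b |t - p| dt = ((p - a)² + (b - p)²) / 2`; adding the two
resulting estimates yields the stated constant.
-/

theorem integral_abs_sub_of_le_of_le {a b p : ℝ} (hap : a ≤ p) (hpb : p ≤ b) :
    ∫ t in a..b, |t - p| = ((p - a) ^ 2 + (b - p) ^ 2) / 2 := by
  have hcont : Continuous fun t : ℝ => |t - p| := by fun_prop
  rw [← integral_add_adjacent_intervals (b := p) (hcont.intervalIntegrable _ _)
    (hcont.intervalIntegrable _ _)]
  have hleft : ∫ t in a..p, |t - p| = ∫ t in a..p, (p - t) := integral_congr fun t ht => by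
    rw [uIcc_of_le hap] at ht
    rw [abs_of_nonpos (by linarith [ht.2]), neg_sub]
  have hright : ∫ t in p..b, |t - p| = ∫ t in p..b, (t - p) := integral_congr fun t ht => by
    rw [uIcc_of_le hpb] at ht
    exact abs_of_nonneg (by linarith [ht.1])
  rw [hleft, hright, integral_sub intervalIntegrable_const intervalIntegrable_id,
    integral_sub intervalIntegrable_id intervalIntegrable_const]
  simp only [intervalIntegral.integral_const, integral_id, smul_eq_mul]
  ring

theorem abs_integral_sub_mul_apply_le {f : ℝ → ℝ} {a b p M : ℝ} (hap : a ≤ p) (hpb : p ≤ b)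
    (hf : IntervalIntegrable f volume a b)
    (hlip : ∀ t ∈ Icc a b, |f t - f p| ≤ M * |t - p|) :
    |(∫ t in a..b, f t) - (b - a) * f p| ≤ M * ((p - a) ^ 2 + (b - p) ^ 2) / 2 := by
  calc |(∫ t in a..b, f t) - (b - a) * f p| = ‖∫ t in a..b, (f t - f p)‖ := by
        rw [integral_sub hf intervalIntegrable_const, intervalIntegral.integral_const,
          smul_eq_mul, Real.norm_eq_abs]
    _ ≤ ∫ t in a..b, M * |t - p| :=
        norm_integral_le_of_norm_le (hap.trans hpb)
          (ae_of_all _ fun t ht => hlip t (Ioc_subset_Icc_self ht))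
          (Continuous.intervalIntegrable (by fun_prop) _ _)
    _ = M * ((p - a) ^ 2 + (b - p) ^ 2) / 2 := by
        rw [intervalIntegral.integral_const_mul, integral_abs_sub_of_le_of_le hap hpb]
        ring

theorem abs_integral_sub_two_point_le {f f' : ℝ → ℝ} {a b c x y M : ℝ}
    (hax : a ≤ x) (hxc : x ≤ c) (hcy : c ≤ y) (hyb : y ≤ b)
    (hf : ∀ t ∈ Icc a b, HasDerivWithinAt f (f' t) (Icc a b) t)
    (hbound : ∀ t ∈ Icc a b, |f' t| ≤ M) :
    |(∫ t in a..b, f t) - ((c - a) * f x + (b - c) * f y)| ≤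
      M * ((x - a) ^ 2 + (c - x) ^ 2 + (y - c) ^ 2 + (b - y) ^ 2) / 2 := by
  have hlip : ∀ s ∈ Icc a b, ∀ t ∈ Icc a b, |f t - f s| ≤ M * |t - s| := fun s hs t ht => by
    simpa only [Real.norm_eq_abs] using
      (convex_Icc a b).norm_image_sub_le_of_norm_hasDerivWithin_le hf
        (by simpa only [Real.norm_eq_abs]) hs ht
  have hcont : ContinuousOn f (Icc a b) := fun t ht => (hf t ht).continuousWithinAt
  have hc : c ∈ Icc a b := ⟨hax.trans hxc, hcy.trans hyb⟩
  have hac : IntervalIntegrable f volume a c :=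
    (hcont.mono (Icc_subset_Icc le_rfl hc.2)).intervalIntegrable_of_Icc hc.1
  have hcb : IntervalIntegrable f volume c b :=
    (hcont.mono (Icc_subset_Icc hc.1 le_rfl)).intervalIntegrable_of_Icc hc.2
  have hleft := abs_integral_sub_mul_apply_le hax hxc hac fun t ht =>
    hlip x ⟨hax, hxc.trans hc.2⟩ t ⟨ht.1, ht.2.trans hc.2⟩
  have hright := abs_integral_sub_mul_apply_le hcy hyb hcb fun t ht =>
    hlip y ⟨hc.1.trans hcy, hyb⟩ t ⟨hc.1.trans ht.1, ht.2⟩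
  rw [← integral_add_adjacent_intervals hac hcb]
  calc _ = |((∫ t in a..c, f t) - (c - a) * f x) + ((∫ t in c..b, f t) - (b - c) * f y)| := by
        ring_nf
    _ ≤ _ := (abs_add_le _ _).trans (add_le_add hleft hright)
    _ = _ := by ring

theorem alomari_general_two_point (M lam x y : ℝ)
    (hx : -1 ≤ x) (hxl : x ≤ lam) (hly : lam ≤ y) (hy : y ≤ 1)
    (f f' : ℝ → ℝ)
    (hf : ∀ t ∈ Set.Icc (-1:ℝ) 1, HasDerivWithinAt f (f' t) (Set.Icc (-1) 1) t)
    (hbound : ∀ t ∈ Set.Icc (-1:ℝ) 1, |f' t| ≤ M) :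
    |(∫ t in (-1:ℝ)..1, f t) - ((1 + lam) * f x + (1 - lam) * f y)| ≤
      ((1 / 4) * ((1 - lam) ^ 2 + (1 + lam) ^ 2) +
        (x + (1 - lam) / 2) ^ 2 + (y - (1 + lam) / 2) ^ 2) * M := by
  convert abs_integral_sub_two_point_le hx hxl hly hy hf hbound using 3 <;> ring
end

section
/- (Four-point symmetric inequality of Alomari) Let λ ∈ (0,1), let 0 ≤ x ≤ 1, and let f : [-1,1] → ℝ be differentiable with |f'(t)| ≤ M for all t ∈ [-1,1]. Then |∫_{-1}^1 f(t) dt - λ[f(-1) + f(1)] - (1-λ)[f(-x) + f(x)]| ≤ M₀(x) M, where M₀(x) = λ² + x² + (1 - λ - x)² for 0 ≤ x ≤ 1 - λ, and M₀(x) = 2x(1-λ) + 2λ - 1 for 1 - λ < x ≤ 1. -/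
/-!
Split `[-1, 1]` at `-1 + λ`, `0`, `1 - λ` and charge each piece to one node: `-1`, `-x`, `x`, `1`.
The lengths of the pieces are `λ, 1 - λ, 1 - λ, λ`, so the error of the rule is the sum of the
one-node errors `∫_a^b f - (b - a) f(c)`. By the mean value inequality each is at most
`M ∫_a^b |t - c| dt`, and with the antiderivative `(t - c)|t - c|/2` of `|t - c|` these four
integrals add up to `λ² + x² + (1 - λ - x)|1 - λ - x|`, which is `M₀(x)` in both cases.
-/

open MeasureTheory intervalIntegral Set

open Asymptotics Filter Topology in
theorem hasDerivAt_mul_abs (x : ℝ) : HasDerivAt (fun s => s * |s|) (2 * |x|) x := by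
  rcases lt_trichotomy x 0 with hx | rfl | hx
  · have heq : (fun s => -s ^ 2) =ᶠ[𝓝 x] fun s => s * |s| := by
      filter_upwards [eventually_lt_nhds hx] with s hs
      rw [abs_of_neg hs]; ring
    refine ((hasDerivAt_pow 2 x).neg.congr_of_eventuallyEq heq.symm).congr_deriv ?_
    rw [abs_of_neg hx]; ring
  · rw [hasDerivAt_iff_isLittleO_nhds_zero]
    simp only [zero_add, abs_zero, mul_zero, sub_zero, smul_zero]
    exact ((isLittleO_pow_id one_lt_two).norm_left.congr_left (by simp [sq])).of_norm_left
  · have heq : (fun s => s ^ 2) =ᶠ[𝓝 x] fun s => s * |s| := by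
      filter_upwards [eventually_gt_nhds hx] with s hs
      rw [abs_of_pos hs]; ring
    refine ((hasDerivAt_pow 2 x).congr_of_eventuallyEq heq.symm).congr_deriv ?_
    rw [abs_of_pos hx]; ring

theorem integral_abs_sub_s18 (a b c : ℝ) :
    ∫ t in a..b, |t - c| = ((b - c) * |b - c| - (a - c) * |a - c|) / 2 := by
  have hderiv (t : ℝ) : HasDerivAt (fun s => (s - c) * |s - c| / 2) |t - c| t := by
    simpa using ((hasDerivAt_mul_abs (t - c)).comp_sub_const t c).div_const 2
  rw [integral_eq_sub_of_hasDerivAt (fun t _ => hderiv t)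
    ((continuous_abs.comp (continuous_sub_right c)).intervalIntegrable a b)]
  ring

theorem abs_integral_sub_mul_le {f : ℝ → ℝ} {a b c M : ℝ} (hab : a ≤ b)
    (hf : IntervalIntegrable f volume a b) (hlip : ∀ t ∈ Icc a b, |f t - f c| ≤ M * |t - c|) :
    |(∫ t in a..b, f t) - (b - a) * f c| ≤ M * ∫ t in a..b, |t - c| := by
  have hcont : Continuous fun t => M * |t - c| := by fun_prop
  calc |(∫ t in a..b, f t) - (b - a) * f c| = |∫ t in a..b, (f t - f c)| := by
        rw [intervalIntegral.integral_sub hf intervalIntegrable_const,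
          intervalIntegral.integral_const, smul_eq_mul]
    _ ≤ ∫ t in a..b, |f t - f c| := abs_integral_le_integral_abs hab
    _ ≤ ∫ t in a..b, M * |t - c| :=
        integral_mono_on hab (hf.sub intervalIntegrable_const).abs (hcont.intervalIntegrable a b) hlip
    _ = M * ∫ t in a..b, |t - c| := intervalIntegral.integral_const_mul M _

theorem abs_integral_sub_mul_le_of_hasDerivWithinAt {f f' : ℝ → ℝ} {p q a b c M : ℝ}
    (hf : ∀ t ∈ Icc p q, HasDerivWithinAt f (f' t) (Icc p q) t)
    (hbound : ∀ t ∈ Icc p q, |f' t| ≤ M) (hpa : p ≤ a) (hab : a ≤ b) (hbq : b ≤ q)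
    (hc : c ∈ Icc p q) :
    |(∫ t in a..b, f t) - (b - a) * f c| ≤ M * ∫ t in a..b, |t - c| := by
  have hsub : Icc a b ⊆ Icc p q := Icc_subset_Icc hpa hbq
  have hint : IntervalIntegrable f volume a b :=
    (ContinuousOn.mono (fun t ht => (hf t ht).continuousWithinAt)
      (uIcc_of_le hab ▸ hsub)).intervalIntegrable
  refine abs_integral_sub_mul_le hab hint fun t ht => ?_
  simpa only [Real.norm_eq_abs] using (convex_Icc p q).norm_image_sub_le_of_norm_hasDerivWithin_le
    hf (fun y hy => by simpa only [Real.norm_eq_abs] using hbound y hy) hc (hsub ht)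

theorem integral_abs_sub_four_point_nodes {lam x : ℝ} (hlam : 0 ≤ lam) (hx : 0 ≤ x) :
    (∫ t in (-1:ℝ)..(-1 + lam), |t - -1|) + (∫ t in (-1 + lam)..0, |t - -x|)
        + (∫ t in (0:ℝ)..(1 - lam), |t - x|) + (∫ t in (1 - lam)..1, |t - 1|) =
      if x ≤ 1 - lam then lam ^ 2 + x ^ 2 + (1 - lam - x) ^ 2
        else 2 * x * (1 - lam) + 2 * lam - 1 := by
  simp only [integral_abs_sub_s18]
  rw [show -1 + lam - -x = -(1 - lam - x) by ring, abs_neg]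
  norm_num [abs_of_nonneg hlam, abs_of_nonneg hx]
  split_ifs with h
  · rw [abs_of_nonneg (by linarith)]; ring
  · rw [abs_of_neg (by linarith)]; ring

theorem alomari_four_point_symmetric (M lam x : ℝ)
    (hlam : lam ∈ Set.Ioo (0:ℝ) 1) (hx : x ∈ Set.Icc (0:ℝ) 1)
    (f f' : ℝ → ℝ)
    (hf : ∀ t ∈ Set.Icc (-1:ℝ) 1, HasDerivWithinAt f (f' t) (Set.Icc (-1) 1) t)
    (hbound : ∀ t ∈ Set.Icc (-1:ℝ) 1, |f' t| ≤ M) :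
    |(∫ t in (-1:ℝ)..1, f t) - lam * (f (-1) + f 1) - (1 - lam) * (f (-x) + f x)| ≤
      (if x ≤ 1 - lam then lam ^ 2 + x ^ 2 + (1 - lam - x) ^ 2
        else 2 * x * (1 - lam) + 2 * lam - 1) * M := by
  obtain ⟨hlam0, hlam1⟩ := hlam
  obtain ⟨hx0, hx1⟩ := hx
  set E : ℝ → ℝ → ℝ → ℝ := fun a b c => (∫ t in a..b, f t) - (b - a) * f c with hE
  have hpiece (a b c : ℝ) (ha : -1 ≤ a) (hab : a ≤ b) (hb : b ≤ 1) (hc₁ : -1 ≤ c) (hc₂ : c ≤ 1) :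
      |E a b c| ≤ (∫ t in a..b, |t - c|) * M :=
    (abs_integral_sub_mul_le_of_hasDerivWithinAt hf hbound ha hab hb ⟨hc₁, hc₂⟩).trans_eq
      (mul_comm _ _)
  have hint (a b : ℝ) (ha : -1 ≤ a) (hab : a ≤ b) (hb : b ≤ 1) : IntervalIntegrable f volume a b :=
    (ContinuousOn.mono (fun t ht => (hf t ht).continuousWithinAt)
      (uIcc_subset_Icc ⟨ha, hab.trans hb⟩ ⟨ha.trans hab, hb⟩)).intervalIntegrable
  have herr : (∫ t in (-1:ℝ)..1, f t) - lam * (f (-1) + f 1) - (1 - lam) * (f (-x) + f x) =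
      E (-1) (-1 + lam) (-1) + E (-1 + lam) 0 (-x) + E 0 (1 - lam) x + E (1 - lam) 1 1 := by
    simp only [hE]
    rw [← integral_add_adjacent_intervals (hint (-1) (1 - lam) le_rfl (by linarith) (by linarith))
        (hint (1 - lam) 1 (by linarith) (by linarith) le_rfl),
      ← integral_add_adjacent_intervals (hint (-1) 0 le_rfl (by linarith) (by linarith))
        (hint 0 (1 - lam) (by linarith) (by linarith) (by linarith)),
      ← integral_add_adjacent_intervals (hint (-1) (-1 + lam) le_rfl (by linarith) (by linarith))
        (hint (-1 + lam) 0 (by linarith) (by linarith) (by linarith))]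
    ring
  rw [herr, ← integral_abs_sub_four_point_nodes hlam0.le hx0, add_mul, add_mul, add_mul]
  calc _ ≤ |E (-1) (-1 + lam) (-1)| + |E (-1 + lam) 0 (-x)| + |E 0 (1 - lam) x| + |E (1 - lam) 1 1| :=
        (abs_add_le _ _).trans (add_le_add_left (abs_add_three _ _ _) _)
    _ ≤ _ := by gcongr <;> apply hpiece <;> linarith
end
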